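/- arXiv:1511.06782 — 9 statements merged into one kernel-verified Lean document; each statement's English description precedes it below -/
import Mathlib

section
/- Let n ≥ 8 be an integer and suppose the complete graph K_n admits a connected and complete k-edge-coloring. Then k ≤ ⌊M⌋, where M is the maximum over all positive integers x of min{f_n(x), g_n(x)}, with f_n(x) = n(n-1)/(2x) and g_n(x) = (x+1)(n - x - 1/2). -/
/-! Let `i` be a color with the fewest edges, `x` of them, and `S` the set of the `s` vertices it
touches; since color `i` is connected, `s ≤ x + 1`. Counting edges gives `k * x ≤ n(n-1)/2`.
A color whose edges all lie inside `S` uses at least `x ≥ s - 1` of the `s(s-1)/2` pairs in `S`,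
so there are at most `s / 2` such colors. Any other color shares a vertex with color `i`, hence
meets `S`, and also leaves `S`; being connected, it has an edge from `S` to its complement, and
distinct colors give distinct such edges, so there are at most `s(n - s)` of them. Thus `k` is at
most both `f_n(s - 1)` and `s(n - s) + s/2 = g_n(s - 1)`. -/

open SimpleGraph

/-- The subgraph of `G` formed by the edges of color `i`. -/
def colorClassSubgraph {V : Type*} {k : ℕ} (G : SimpleGraph V) (c : Sym2 V → Fin k)
    (i : Fin k) : G.Subgraph where
  verts := {v | ∃ w, G.Adj v w ∧ c s(v, w) = i}
  Adj v w := G.Adj v w ∧ c s(v, w) = i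
  adj_sub h := h.1
  edge_vert h := ⟨_, h⟩
  symm := ⟨fun v w h => ⟨h.1.symm, by rw [Sym2.eq_swap]; exact h.2⟩⟩

/-- `c` is a complete edge-coloring of `G` with `k` colors: every color is used on some
edge, and every two distinct colors appear on a pair of edges sharing a vertex. -/
def IsCompleteEdgeColoring {V : Type*} {k : ℕ} (G : SimpleGraph V)
    (c : Sym2 V → Fin k) : Prop :=
  (∀ i : Fin k, ∃ e ∈ G.edgeSet, c e = i) ∧
  ∀ i j : Fin k, i ≠ j →
    ∃ u v w : V, G.Adj u v ∧ G.Adj u w ∧ c s(u, v) = i ∧ c s(u, w) = j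

/-- `c` is a connected edge-coloring: each color class induces a connected subgraph. -/
def IsConnectedEdgeColoring {V : Type*} {k : ℕ} (G : SimpleGraph V)
    (c : Sym2 V → Fin k) : Prop :=
  ∀ i : Fin k, (colorClassSubgraph G c i).Connected

open Finset

theorem SimpleGraph.Subgraph.Connected.exists_adj_mem_notMem {V : Type*} {G : SimpleGraph V}
    {H : G.Subgraph} (hH : H.Connected) {S : Set V} {u v : V} (hu : u ∈ H.verts)
    (hv : v ∈ H.verts) (huS : u ∈ S) (hvS : v ∉ S) :
    ∃ a b, H.Adj a b ∧ a ∈ S ∧ b ∉ S := by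
  obtain ⟨p⟩ := hH.coe.preconnected ⟨u, hu⟩ ⟨v, hv⟩
  obtain ⟨d, -, hd⟩ := p.exists_boundary_dart {w : H.verts | (w : V) ∈ S} huS hvS
  exact ⟨_, _, d.adj, hd⟩

section ColorClasses

variable {V : Type*} [Fintype V] (G : SimpleGraph V) [DecidableRel G.Adj]
  {k : ℕ} (c : Sym2 V → Fin k)

def colorEdges (i : Fin k) : Finset (Sym2 V) := {e ∈ G.edgeFinset | c e = i}

def colorVerts (i : Fin k) : Finset V := {v | ∃ w, G.Adj v w ∧ c s(v, w) = i}

variable {G c}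

theorem mem_colorEdges {i : Fin k} {a b : V} :
    s(a, b) ∈ colorEdges G c i ↔ G.Adj a b ∧ c s(a, b) = i := by
  simp [colorEdges]

theorem mem_colorVerts {i : Fin k} {v : V} :
    v ∈ colorVerts G c i ↔ ∃ w, G.Adj v w ∧ c s(v, w) = i := by
  simp [colorVerts]

theorem coe_colorVerts (i : Fin k) :
    (colorVerts G c i : Set V) = (colorClassSubgraph G c i).verts := by
  ext; simp [colorVerts, colorClassSubgraph]

theorem edgeSet_colorClassSubgraph (i : Fin k) :
    (colorClassSubgraph G c i).edgeSet = colorEdges G c i := by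
  ext e
  induction e using Sym2.ind
  simp [mem_colorEdges, colorClassSubgraph]

theorem card_colorVerts_le (i : Fin k) (h : (colorClassSubgraph G c i).Connected) :
    #(colorVerts G c i) ≤ #(colorEdges G c i) + 1 := by
  have := h.coe.card_vert_le_card_edgeSet_add_one
  rwa [← Nat.card_image_of_injective (Sym2.map.injective Subtype.val_injective),
    Subgraph.image_coe_edgeSet_coe, edgeSet_colorClassSubgraph, ← coe_colorVerts,
    Nat.card_coe_set_eq, Nat.card_coe_set_eq, Set.ncard_coe_finset, Set.ncard_coe_finset] at this

theorem card_mul_le_card_of_colorEdges_subset [DecidableEq V] {A : Finset (Fin k)}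
    {F : Finset (Sym2 V)} {x : ℕ} (hx : ∀ j ∈ A, x ≤ #(colorEdges G c j))
    (hF : ∀ j ∈ A, colorEdges G c j ⊆ F) :
    #A * x ≤ #F := calc
  #A * x ≤ ∑ j ∈ A, #(colorEdges G c j) := by
    simpa using card_nsmul_le_sum A _ x hx
  _ = #(A.biUnion (colorEdges G c)) := by
    refine (card_biUnion fun j _ j' _ hne => disjoint_filter.2 fun e _ h h' => hne ?_).symm
    rw [← h, h']
  _ ≤ #F := card_le_card (biUnion_subset.2 hF)

theorem colorEdges_subset_image_offDiag [DecidableEq V] (i : Fin k) :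
    colorEdges G c i ⊆ (colorVerts G c i).offDiag.image Sym2.mk.uncurry := by
  intro e he
  induction e using Sym2.ind with | _ a b
  obtain ⟨hab, hc⟩ := mem_colorEdges.1 he
  refine mem_image.2 ⟨(a, b), mem_offDiag.2 ⟨mem_colorVerts.2 ⟨b, hab, hc⟩,
    mem_colorVerts.2 ⟨a, hab.symm, Sym2.eq_swap ▸ hc⟩, hab.ne⟩, rfl⟩

theorem exists_mem_colorVerts_notMem_of_not_subset [DecidableEq V] {j : Fin k} {S : Finset V}
    (h : ¬ colorEdges G c j ⊆ S.offDiag.image Sym2.mk.uncurry) :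
    ∃ y ∈ colorVerts G c j, y ∉ S := by
  obtain ⟨e, he, heS⟩ := not_subset.1 h
  induction e using Sym2.ind with | _ a b
  obtain ⟨hab, hc⟩ := mem_colorEdges.1 he
  by_cases ha : a ∈ S
  · refine ⟨b, mem_colorVerts.2 ⟨a, hab.symm, Sym2.eq_swap ▸ hc⟩, fun hb => heS ?_⟩
    exact mem_image.2 ⟨(a, b), mem_offDiag.2 ⟨ha, hb, hab.ne⟩, rfl⟩
  · exact ⟨a, mem_colorVerts.2 ⟨b, hab, hc⟩, ha⟩

theorem exists_crossing_edge_of_mem_colorVerts_notMem [DecidableEq V]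
    (hcomplete : IsCompleteEdgeColoring G c) (hconn : IsConnectedEdgeColoring G c)
    {i j : Fin k} (hij : i ≠ j) {y : V} (hy : y ∈ colorVerts G c j)
    (hyi : y ∉ colorVerts G c i) :
    ∃ p ∈ colorVerts G c i ×ˢ (colorVerts G c i)ᶜ, c s(p.1, p.2) = j := by
  obtain ⟨u, v, w, huv, huw, hv, hw⟩ := hcomplete.2 i j hij
  have hu : u ∈ (colorClassSubgraph G c j).verts := ⟨w, huw, hw⟩
  have hy' : y ∈ (colorClassSubgraph G c j).verts := by rw [← coe_colorVerts]; exact hy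
  obtain ⟨a, b, hab, ha, hb⟩ := (hconn j).exists_adj_mem_notMem (S := colorVerts G c i) hu hy'
    (mem_colorVerts.2 ⟨v, huv, hv⟩) hyi
  exact ⟨(a, b), mem_product.2 ⟨ha, mem_compl.2 hb⟩, hab.2⟩

theorem IsCompleteEdgeColoring.exists_mul_le_card_edgeFinset_and_two_mul_le
    (hcomplete : IsCompleteEdgeColoring G c) (hconn : IsConnectedEdgeColoring G c)
    (hk : 0 < k) : ∃ s, 2 ≤ s ∧ s ≤ Fintype.card V ∧ k * (s - 1) ≤ #G.edgeFinset ∧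
      2 * k ≤ s + 2 * (s * (Fintype.card V - s)) := by
  classical
  obtain ⟨i, -, hmin⟩ := exists_min_image univ (fun j => #(colorEdges G c j))
    (univ_nonempty_iff.2 ⟨⟨0, hk⟩⟩)
  set S := colorVerts G c i
  set x := #(colorEdges G c i)
  set P := S.offDiag.image Sym2.mk.uncurry
  have hSx : #S ≤ x + 1 := card_colorVerts_le i (hconn i)
  have hS : 2 ≤ #S := by
    obtain ⟨e, he, hei⟩ := hcomplete.1 i
    have hP : P.Nonempty :=
      ⟨e, colorEdges_subset_image_offDiag i (mem_filter.2 ⟨G.mem_edgeFinset.2 he, hei⟩)⟩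
    obtain ⟨p, hp⟩ := image_nonempty.1 hP
    obtain ⟨h1, h2, h12⟩ := mem_offDiag.1 hp
    exact one_lt_card.2 ⟨_, h1, _, h2, h12⟩
  have hinside : 2 * #{j | colorEdges G c j ⊆ P} ≤ #S := by
    have hcount := card_mul_le_card_of_colorEdges_subset (A := {j | colorEdges G c j ⊆ P})
      (fun j _ => hmin j (mem_univ j)) (fun j hj => (mem_filter.1 hj).2)
    have h2P : 2 * #P = #S * #S - #S := by
      rw [← offDiag_card]; exact Sym2.two_mul_card_image_offDiag S
    have hSS : #S * #S ≤ #S * x + #S := by simpa [mul_add] using Nat.mul_le_mul_left #S hSx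
    refine Nat.le_of_mul_le_mul_right (c := x) ?_ (by omega)
    rw [mul_assoc]
    omega
  have houtside : #{j | ¬ colorEdges G c j ⊆ P} ≤ #S * (Fintype.card V - #S) := calc
    _ ≤ #((S ×ˢ Sᶜ).image fun p => c s(p.1, p.2)) := by
      refine card_le_card fun j hj => ?_
      have hj := (mem_filter.1 hj).2
      have hij : i ≠ j := by rintro rfl; exact hj (colorEdges_subset_image_offDiag i)
      obtain ⟨y, hy, hyS⟩ := exists_mem_colorVerts_notMem_of_not_subset hj
      exact mem_image.2 (exists_crossing_edge_of_mem_colorVerts_notMem hcomplete hconn hij hy hyS)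
    _ ≤ #S * (Fintype.card V - #S) := by
      rw [← card_compl, ← card_product]; exact card_image_le
  refine ⟨#S, hS, card_le_univ S, ?_, ?_⟩
  · have := card_mul_le_card_of_colorEdges_subset hmin fun j _ => filter_subset _ _
    rw [card_univ, Fintype.card_fin] at this
    exact (Nat.mul_le_mul_left k (by omega)).trans this
  · have := card_filter_add_card_filter_not (s := univ) (fun j => colorEdges G c j ⊆ P)
    rw [card_univ, Fintype.card_fin] at this
    omega

end ColorClasses

theorem natCast_le_min_of_mul_le_choose_two {n k s : ℕ} (hs : 2 ≤ s) (hsn : s ≤ n)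
    (hf : k * (s - 1) ≤ n.choose 2) (hg : 2 * k ≤ s + 2 * (s * (n - s))) :
    (k : ℝ) ≤ min ((n * (n - 1) : ℝ) / (2 * ((s - 1 : ℕ) : ℝ)))
      ((((s - 1 : ℕ) : ℝ) + 1) * ((n : ℝ) - ((s - 1 : ℕ) : ℝ) - 1 / 2)) := by
  have hf' : (k : ℝ) * ((s - 1 : ℕ) : ℝ) ≤ n * (n - 1) / 2 := by
    rw [← Nat.cast_choose_two]; exact_mod_cast hf
  have hg' : 2 * (k : ℝ) ≤ s + 2 * (s * (n - s)) := by
    rw [← Nat.cast_sub hsn]; exact_mod_cast hg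
  have hs' : (2 : ℝ) ≤ s := by exact_mod_cast hs
  rw [Nat.cast_sub (by omega), Nat.cast_one] at hf' ⊢
  refine le_min ?_ (by nlinarith)
  rw [le_div_iff₀ (by linarith)]
  linarith

theorem connected_pseudoachromatic_index_le_floor_max_min
    (n k : ℕ) (hn : 8 ≤ n)
    (c : Sym2 (Fin n) → Fin k)
    (hcomplete : IsCompleteEdgeColoring (⊤ : SimpleGraph (Fin n)) c)
    (hconn : IsConnectedEdgeColoring (⊤ : SimpleGraph (Fin n)) c)
    (M : ℝ)
    (hM : IsGreatest {y : ℝ | ∃ x : ℕ, 0 < x ∧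
      y = min ((n * (n - 1) : ℝ) / (2 * x)) ((x + 1) * ((n : ℝ) - x - 1 / 2))} M) :
    (k : ℤ) ≤ ⌊M⌋ := by
  rw [Int.le_floor, Int.cast_natCast]
  rcases Nat.eq_zero_or_pos k with rfl | hk
  · have hn' : (8 : ℝ) ≤ n := by exact_mod_cast hn
    refine (le_min ?_ ?_).trans (hM.2 ⟨1, one_pos, rfl⟩) <;> push_cast
    · exact div_nonneg (by nlinarith) (by norm_num)
    · linarith
  obtain ⟨s, hs, hsn, hf, hg⟩ := hcomplete.exists_mul_le_card_edgeFinset_and_two_mul_le hconn hk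
  rw [card_edgeFinset_top_eq_card_choose_two, Fintype.card_fin] at hf
  rw [Fintype.card_fin] at hsn hg
  exact (natCast_le_min_of_mul_le_choose_two hs hsn hf hg).trans (hM.2 ⟨s - 1, by omega, rfl⟩)
end

section
/- Let n ≥ 8 be an integer. If the complete graph K_n admits a connected and complete k-edge-coloring, then k ≤ (n-1)·(√(n/2 + 1/16) + 1/4). -/
open SimpleGraph

/-!
Let `d v` be the number of colors at a vertex `v` and `p v` the number of colors with exactly
one edge at `v`. Completeness says that every ordered pair of distinct colors occurs at some
vertex, so `k² - k ≤ ∑ (d v² - d v)`, and `v` has `n - 1` incident edges, so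
`2 d v ≤ n - 1 + p v`. A connected color class on `t` vertices has at least `t - 1` edges and,
once `t ≥ 3`, a vertex of class degree at least `2`; hence `∑ d v ≤ n (n - 1) / 2 + k` and
`∑ p v ≤ ∑ d v - k`. Together these give `2 k² ≤ n (n - 1)² + (n - 1) k`, whose positive root
is the bound. A class with `t ≤ 2` is a single edge `ab` that every color meets, so then
`k ≤ d a + d b ≤ 2 (n - 1)`.
-/

open Finset

namespace SimpleGraph

variable {V : Type*} {G : SimpleGraph V}

lemma Connected.exists_adj_adj_of_two_lt_card [Fintype V] (h : G.Connected)
    (hV : 2 < Fintype.card V) : ∃ v a b, a ≠ b ∧ G.Adj v a ∧ G.Adj v b := by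
  by_cases hcomplete : ∀ u w, u ≠ w → G.Adj u w
  · obtain ⟨v, a, b, hva, hvb, hab⟩ := Fintype.two_lt_card_iff.mp hV
    exact ⟨v, a, b, hab, hcomplete v a hva, hcomplete v b hvb⟩
  · push Not at hcomplete
    obtain ⟨u, w, hne, hnadj⟩ := hcomplete
    obtain ⟨p, hp⟩ := (h.preconnected u w).exists_walk_length_eq_dist
    obtain ⟨x, v, b, hxv, hvb, -, hxb⟩ :=
      p.exists_adj_adj_not_adj_ne hp (h.one_lt_dist_of_ne_of_not_adj hne hnadj)
    exact ⟨v, x, b, hxb, hxv.symm, hvb⟩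

namespace Subgraph

variable {G' : G.Subgraph}

lemma Connected.ncard_verts_le_ncard_edgeSet_add_one (h : G'.Connected) :
    G'.verts.ncard ≤ G'.edgeSet.ncard + 1 := by
  rw [← image_coe_edgeSet_coe,
    Set.ncard_image_of_injective _ (Sym2.map.injective Subtype.val_injective)]
  simpa only [Nat.card_coe_set_eq] using
    (Subgraph.connected_iff'.mp h).card_vert_le_card_edgeSet_add_one

lemma Connected.exists_adj_adj_of_two_lt_ncard [Finite V] (h : G'.Connected)
    (hV : 2 < G'.verts.ncard) : ∃ v a b, a ≠ b ∧ G'.Adj v a ∧ G'.Adj v b := by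
  have := Fintype.ofFinite G'.verts
  obtain ⟨v, a, b, hab, hva, hvb⟩ :=
    (Subgraph.connected_iff'.mp h).exists_adj_adj_of_two_lt_card
      (by rwa [← Nat.card_eq_fintype_card, Nat.card_coe_set_eq])
  exact ⟨v, a, b, Subtype.coe_injective.ne hab, hva, hvb⟩

end Subgraph

end SimpleGraph

lemma Finset.two_mul_card_filter_ne_zero_le {ι : Type*} (s : Finset ι) (f : ι → ℕ) :
    2 * #{i ∈ s | f i ≠ 0} ≤ ∑ i ∈ s, f i + #{i ∈ s | f i = 1} := by
  simp only [card_filter, mul_sum, ← sum_add_distrib]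
  gcongr with i
  split_ifs <;> omega

lemma le_mul_sqrt_add_of_two_mul_sq_le {x a b : ℝ} (ha : 0 ≤ a) (hb : 0 ≤ b)
    (h : 2 * x ^ 2 ≤ b * a ^ 2 + a * x) : x ≤ a * (√(b / 2 + 1 / 16) + 1 / 4) := by
  set s := √(b / 2 + 1 / 16)
  have hs : s ^ 2 = b / 2 + 1 / 16 := Real.sq_sqrt (by positivity)
  have hs0 : 0 ≤ s := Real.sqrt_nonneg _
  -- `2x² - ax - ba² = 2 (x - a (s + 1/4)) (x + a (s - 1/4))`
  by_contra! hx
  nlinarith [mul_nonneg ha hs0]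

section ColorClasses

variable {V : Type*} {k : ℕ} (G : SimpleGraph V) (c : Sym2 V → Fin k)

lemma colorClassSubgraph_edgeSet (i : Fin k) :
    (colorClassSubgraph G c i).edgeSet = {e ∈ G.edgeSet | c e = i} := by
  ext e
  induction e using Sym2.ind
  simp [colorClassSubgraph]

lemma sum_ncard_colorClassSubgraph_edgeSet [Fintype G.edgeSet] :
    ∑ i, (colorClassSubgraph G c i).edgeSet.ncard = #G.edgeFinset := by
  classical
  rw [card_eq_sum_card_fiberwise (f := c) (t := univ) fun _ _ ↦ mem_univ _]
  refine sum_congr rfl fun i _ ↦ ?_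
  rw [← Set.ncard_coe_finset, colorClassSubgraph_edgeSet, coe_filter]
  simp only [mem_edgeFinset]

end ColorClasses

section CompleteGraph

variable {V : Type*} [Fintype V] [DecidableEq V] {k : ℕ} (c : Sym2 V → Fin k)

def colorNbrs (v : V) (i : Fin k) : Finset V := {w | v ≠ w ∧ c s(v, w) = i}

def colorsAt (v : V) : Finset (Fin k) := {i | (colorNbrs c v i).Nonempty}

def pendantColorsAt (v : V) : Finset (Fin k) := {i | #(colorNbrs c v i) = 1}

variable {c}

lemma mem_colorNbrs {v w : V} {i : Fin k} : w ∈ colorNbrs c v i ↔ v ≠ w ∧ c s(v, w) = i := by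
  simp [colorNbrs]

lemma mem_colorsAt {v : V} {i : Fin k} : i ∈ colorsAt c v ↔ ∃ w, v ≠ w ∧ c s(v, w) = i := by
  simp [colorsAt, Finset.Nonempty, mem_colorNbrs]

lemma colorClassSubgraph_top_adj {v w : V} {i : Fin k} :
    (colorClassSubgraph ⊤ c i).Adj v w ↔ w ∈ colorNbrs c v i := by
  simp [colorClassSubgraph, mem_colorNbrs]

lemma mem_colorClassSubgraph_top_verts {v : V} {i : Fin k} :
    v ∈ (colorClassSubgraph ⊤ c i).verts ↔ i ∈ colorsAt c v := by
  simp [colorClassSubgraph, mem_colorsAt]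

variable (c)

lemma sum_card_colorNbrs (v : V) : ∑ i, #(colorNbrs c v i) = Fintype.card V - 1 := by
  rw [← card_univ, ← card_erase_of_mem (mem_univ v),
    card_eq_sum_card_fiberwise (f := fun w ↦ c s(v, w)) (t := univ) fun _ _ ↦ mem_univ _]
  refine sum_congr rfl fun i _ ↦ congrArg card ?_
  ext w
  simp [mem_colorNbrs, eq_comm]

lemma two_mul_card_colorsAt_le (v : V) :
    2 * #(colorsAt c v) ≤ Fintype.card V - 1 + #(pendantColorsAt c v) := by
  have := two_mul_card_filter_ne_zero_le univ fun i ↦ #(colorNbrs c v i)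
  simp only [card_ne_zero, sum_card_colorNbrs] at this
  exact this

lemma card_pendantColorsAt_le (v : V) : #(pendantColorsAt c v) ≤ #(colorsAt c v) :=
  card_le_card fun i hi ↦ by
    simp only [pendantColorsAt, colorsAt, mem_filter, mem_univ, true_and] at hi ⊢
    exact card_pos.mp (by omega)

lemma card_colorsAt_le (v : V) : #(colorsAt c v) ≤ Fintype.card V - 1 := by
  have := two_mul_card_colorsAt_le c v
  have := card_pendantColorsAt_le c v
  omega

lemma two_mul_sq_card_colorsAt_le (v : V) :
    2 * #(colorsAt c v) ^ 2 ≤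
      (Fintype.card V - 1) * (#(colorsAt c v) + #(pendantColorsAt c v)) := by
  have := two_mul_card_colorsAt_le c v
  have := card_pendantColorsAt_le c v
  have := card_colorsAt_le c v
  nlinarith

lemma ncard_colorClassSubgraph_top_verts (i : Fin k) :
    (colorClassSubgraph ⊤ c i).verts.ncard = #{v | i ∈ colorsAt c v} := by
  rw [← Set.ncard_coe_finset, coe_filter]
  simp only [mem_univ, true_and, ← mem_colorClassSubgraph_top_verts, Set.ofPred_mem_eq]

lemma sum_card_colorsAt :
    ∑ v, #(colorsAt c v) = ∑ i, (colorClassSubgraph ⊤ c i).verts.ncard := by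
  simp only [ncard_colorClassSubgraph_top_verts]
  simpa only [bipartiteAbove, bipartiteBelow, filter_univ_mem] using
    sum_card_bipartiteAbove_eq_sum_card_bipartiteBelow (s := univ) (t := univ)
      (r := fun v i ↦ i ∈ colorsAt c v)

lemma sum_card_pendantColorsAt :
    ∑ v, #(pendantColorsAt c v) = ∑ i, #{v | #(colorNbrs c v i) = 1} :=
  sum_card_bipartiteAbove_eq_sum_card_bipartiteBelow (s := univ) (t := univ)
    (r := fun v i ↦ #(colorNbrs c v i) = 1)

end CompleteGraph

section Counting

variable {V : Type*} [Fintype V] [DecidableEq V] {k : ℕ} {c : Sym2 V → Fin k}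

lemma IsConnectedEdgeColoring.two_mul_sum_card_colorsAt_le
    (hconn : IsConnectedEdgeColoring ⊤ c) :
    2 * ∑ v, #(colorsAt c v) ≤ Fintype.card V * (Fintype.card V - 1) + 2 * k := by
  calc 2 * ∑ v, #(colorsAt c v) = 2 * ∑ i, (colorClassSubgraph ⊤ c i).verts.ncard := by
        rw [sum_card_colorsAt]
    _ ≤ 2 * ∑ i, ((colorClassSubgraph ⊤ c i).edgeSet.ncard + 1) := by
        gcongr with i
        exact (hconn i).ncard_verts_le_ncard_edgeSet_add_one
    _ = 2 * #(⊤ : SimpleGraph V).edgeFinset + 2 * k := by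
        simp [sum_add_distrib, sum_ncard_colorClassSubgraph_edgeSet, mul_add]
    _ = Fintype.card V * (Fintype.card V - 1) + 2 * k := by
        rw [← sum_degrees_eq_twice_card_edges]
        simp

lemma IsConnectedEdgeColoring.card_filter_card_colorNbrs_eq_one_lt
    (hconn : IsConnectedEdgeColoring ⊤ c) (i : Fin k)
    (hi : 2 < (colorClassSubgraph ⊤ c i).verts.ncard) :
    #{v | #(colorNbrs c v i) = 1} < (colorClassSubgraph ⊤ c i).verts.ncard := by
  obtain ⟨v, a, b, hab, hva, hvb⟩ := (hconn i).exists_adj_adj_of_two_lt_ncard hi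
  rw [colorClassSubgraph_top_adj] at hva hvb
  have hv : 2 ≤ #(colorNbrs c v i) := by
    rw [← card_pair hab]
    exact card_le_card (insert_subset hva (singleton_subset_iff.mpr hvb))
  rw [ncard_colorClassSubgraph_top_verts]
  refine card_lt_card ((ssubset_iff_of_subset fun w hw ↦ ?_).mpr ⟨v, ?_, ?_⟩)
  · simp only [colorsAt, mem_filter, mem_univ, true_and] at hw ⊢
    exact card_pos.mp (by omega)
  · simp only [colorsAt, mem_filter, mem_univ, true_and]
    exact card_pos.mp (by omega)
  · simp only [mem_filter, mem_univ, true_and]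
    omega

lemma IsConnectedEdgeColoring.sum_card_pendantColorsAt_add_le
    (hconn : IsConnectedEdgeColoring ⊤ c)
    (hbig : ∀ i, 2 < (colorClassSubgraph ⊤ c i).verts.ncard) :
    ∑ v, #(pendantColorsAt c v) + k ≤ ∑ v, #(colorsAt c v) := by
  rw [sum_card_pendantColorsAt, sum_card_colorsAt]
  calc _ = ∑ i : Fin k, (#{v | #(colorNbrs c v i) = 1} + 1) := by simp [sum_add_distrib]
    _ ≤ _ := sum_le_sum fun i _ ↦ hconn.card_filter_card_colorNbrs_eq_one_lt i (hbig i)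

lemma IsCompleteEdgeColoring.exists_mem_colorsAt_mem_colorsAt
    (hc : IsCompleteEdgeColoring ⊤ c) {i j : Fin k} (hij : i ≠ j) :
    ∃ u, i ∈ colorsAt c u ∧ j ∈ colorsAt c u := by
  obtain ⟨u, v, w, huv, huw, hv, hw⟩ := hc.2 i j hij
  exact ⟨u, mem_colorsAt.mpr ⟨v, huv.ne, hv⟩, mem_colorsAt.mpr ⟨w, huw.ne, hw⟩⟩

lemma IsCompleteEdgeColoring.mul_self_add_sum_card_colorsAt_le
    (hc : IsCompleteEdgeColoring ⊤ c) :
    k * k + ∑ v, #(colorsAt c v) ≤ k + ∑ v, #(colorsAt c v) ^ 2 := by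
  have hcover :
      (univ : Finset (Fin k)).offDiag ⊆ univ.biUnion fun v ↦ (colorsAt c v).offDiag := by
    rintro ⟨i, j⟩ hij
    obtain ⟨-, -, hij⟩ := mem_offDiag.mp hij
    obtain ⟨u, hi, hj⟩ := hc.exists_mem_colorsAt_mem_colorsAt hij
    exact mem_biUnion.mpr ⟨u, mem_univ _, mem_offDiag.mpr ⟨hi, hj, hij⟩⟩
  have hpairs := (card_le_card hcover).trans card_biUnion_le
  simp only [offDiag_card, card_univ, Fintype.card_fin] at hpairs
  have hsum : ∑ v, (#(colorsAt c v) * #(colorsAt c v) - #(colorsAt c v)) +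
      ∑ v, #(colorsAt c v) = ∑ v, #(colorsAt c v) ^ 2 := by
    rw [← sum_add_distrib]
    exact sum_congr rfl fun v _ ↦ by rw [sq, Nat.sub_add_cancel (Nat.le_mul_self _)]
  have := Nat.le_mul_self k
  omega

lemma IsCompleteEdgeColoring.card_le_of_ncard_verts_le_two
    (hc : IsCompleteEdgeColoring ⊤ c) (i : Fin k)
    (hi : (colorClassSubgraph ⊤ c i).verts.ncard ≤ 2) : k ≤ 2 * (Fintype.card V - 1) := by
  obtain ⟨e, he, hce⟩ := hc.1 i
  induction e using Sym2.ind with | _ a b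
  have hab : a ≠ b := by simpa using he
  have ha : i ∈ colorsAt c a := mem_colorsAt.mpr ⟨b, hab, hce⟩
  have hb : i ∈ colorsAt c b := mem_colorsAt.mpr ⟨a, hab.symm, Sym2.eq_swap ▸ hce⟩
  have hverts : (colorClassSubgraph ⊤ c i).verts = {a, b} := by
    refine (Set.eq_of_subset_of_ncard_le ?_ (by rwa [Set.ncard_pair hab])
      (Set.toFinite _)).symm
    simp [Set.insert_subset_iff, mem_colorClassSubgraph_top_verts, ha, hb]
  have hcover : (univ : Finset (Fin k)) ⊆ colorsAt c a ∪ colorsAt c b := by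
    intro j _
    rcases eq_or_ne i j with rfl | hij
    · exact mem_union_left _ ha
    obtain ⟨u, hiu, hju⟩ := hc.exists_mem_colorsAt_mem_colorsAt hij
    have hu : u ∈ ({a, b} : Set V) := hverts ▸ mem_colorClassSubgraph_top_verts.mpr hiu
    rcases hu with rfl | rfl
    · exact mem_union_left _ hju
    · exact mem_union_right _ hju
  calc k = #(univ : Finset (Fin k)) := by simp
    _ ≤ #(colorsAt c a) + #(colorsAt c b) := (card_le_card hcover).trans (card_union_le _ _)
    _ ≤ 2 * (Fintype.card V - 1) := by
      have := card_colorsAt_le c a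
      have := card_colorsAt_le c b
      omega

theorem IsCompleteEdgeColoring.two_mul_sq_le (hc : IsCompleteEdgeColoring ⊤ c)
    (hconn : IsConnectedEdgeColoring ⊤ c) (hV : 6 ≤ Fintype.card V) :
    2 * k ^ 2 ≤ Fintype.card V * (Fintype.card V - 1) ^ 2 + (Fintype.card V - 1) * k := by
  obtain ⟨m, hm⟩ : ∃ m, Fintype.card V = m + 1 := ⟨_, (Nat.succ_pred_eq_of_pos (by omega)).symm⟩
  by_cases hsmall : k ≤ 2 * (Fintype.card V - 1)
  · rw [hm, Nat.add_sub_cancel] at hsmall ⊢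
    nlinarith
  have hbig : ∀ i, 2 < (colorClassSubgraph ⊤ c i).verts.ncard := fun i ↦ by
    by_contra! h
    exact hsmall (hc.card_le_of_ncard_verts_le_two i h)
  have hpairs := hc.mul_self_add_sum_card_colorsAt_le
  have hvertices : 2 * ∑ v, #(colorsAt c v) ^ 2
      ≤ (Fintype.card V - 1) * (∑ v, #(colorsAt c v) + ∑ v, #(pendantColorsAt c v)) := by
    rw [mul_sum, ← sum_add_distrib, mul_sum]
    exact sum_le_sum fun v _ ↦ two_mul_sq_card_colorsAt_le c v
  have hpendant := hconn.sum_card_pendantColorsAt_add_le hbig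
  have hcolors := hconn.two_mul_sum_card_colorsAt_le
  rw [hm, Nat.add_sub_cancel] at hvertices hcolors ⊢
  nlinarith

end Counting

theorem connected_pseudoachromatic_index_upper_bound
    (n k : ℕ) (hn : 8 ≤ n)
    (c : Sym2 (Fin n) → Fin k)
    (hcomplete : IsCompleteEdgeColoring (⊤ : SimpleGraph (Fin n)) c)
    (hconn : IsConnectedEdgeColoring (⊤ : SimpleGraph (Fin n)) c) :
    (k : ℝ) ≤ ((n : ℝ) - 1) * (Real.sqrt ((n : ℝ) / 2 + 1 / 16) + 1 / 4) := by
  have hcount := hcomplete.two_mul_sq_le hconn (by simp; omega)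
  rw [Fintype.card_fin] at hcount
  have hcast : ((n - 1 : ℕ) : ℝ) = n - 1 := by rw [Nat.cast_sub (by omega), Nat.cast_one]
  have hreal : 2 * (k : ℝ) ^ 2 ≤ n * ((n : ℝ) - 1) ^ 2 + ((n : ℝ) - 1) * k := by
    rw [← hcast]
    exact_mod_cast hcount
  exact le_mul_sqrt_add_of_two_mul_sq_le (by rw [← hcast]; positivity) n.cast_nonneg hreal
end

section
/- Let ψ'_c(K_n) denote the largest k for which the complete graph K_n admits a connected and complete k-edge-coloring. Then the limit superior, as n → ∞, of ψ'_c(K_n)/n^{3/2} is at most 1/√2. -/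
open SimpleGraph

/-- The connected-pseudoachromatic index of the complete graph `K_n`: the supremum of
the set of `k` for which `K_n` admits a connected and complete `k`-edge-coloring. -/
noncomputable def connectedPseudoachromaticIndex (n : ℕ) : ℕ :=
  sSup {k : ℕ | ∃ c : Sym2 (Fin n) → Fin k,
    IsCompleteEdgeColoring (⊤ : SimpleGraph (Fin n)) c ∧
      IsConnectedEdgeColoring (⊤ : SimpleGraph (Fin n)) c}

/-!
Let `c` be a complete connected `k`-edge-colouring of `K_n` and `T v` the set of colours at `v`.
By completeness every pair `(i, j)` of colours, equal or not, lies in some `T v ×ˢ T v`, so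
`k² ≤ ∑ |T v|² ≤ n ∑ |T v|`. Double counting gives `∑ |T v| = ∑ |V_i|`, where `V_i` spans colour
class `i`; being connected, that class has at least `|V_i| - 1` edges, so `∑ |V_i| ≤ C(n,2) + k`.
Hence `k² ≤ n³/2 + n k`, and `k ≤ n^{3/2}/√2 + n`.
-/

open Finset Filter Topology

theorem Nat.sSup_mem_or_eq_zero (s : Set ℕ) : sSup s ∈ s ∨ sSup s = 0 := by
  rcases s.eq_empty_or_nonempty with rfl | hne
  · exact .inr csSup_empty
  by_cases hbdd : BddAbove s
  · exact .inl (Nat.sSup_mem hne hbdd)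
  · exact .inr (Nat.sSup_of_not_bddAbove hbdd)

theorem le_add_of_sq_le_sq_add_mul {α : Type*} [CommRing α] [LinearOrder α]
    [IsStrictOrderedRing α] {a b y : α} (ha : 0 ≤ a) (hb : 0 ≤ b)
    (h : y ^ 2 ≤ a ^ 2 + b * y) : y ≤ a + b := by
  by_contra! hlt
  nlinarith

namespace SimpleGraph

variable {V : Type*} {k : ℕ} {G : SimpleGraph V} {c : Sym2 V → Fin k}

theorem Subgraph.Connected.ncard_verts_le_ncard_edgeSet_add_one_s3 [Finite V] {H : G.Subgraph}
    (h : H.Connected) : H.verts.ncard ≤ H.edgeSet.ncard + 1 := by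
  rw [← H.image_coe_edgeSet_coe,
    Set.ncard_image_of_injective _ (Sym2.map.injective Subtype.val_injective),
    ← Nat.card_coe_set_eq, ← Nat.card_coe_set_eq]
  exact h.coe.card_vert_le_card_edgeSet_add_one

theorem mem_colorClassSubgraph_verts {i : Fin k} {v : V} :
    v ∈ (colorClassSubgraph G c i).verts ↔ ∃ w, G.Adj v w ∧ c s(v, w) = i := Iff.rfl

theorem colorClassSubgraph_edgeSet (i : Fin k) :
    (colorClassSubgraph G c i).edgeSet = {e ∈ G.edgeSet | c e = i} := by
  ext e
  induction e using Sym2.ind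
  rfl

variable [Fintype V] [DecidableRel G.Adj]

variable (G c) in
def colorsAt (v : V) : Finset (Fin k) := (G.neighborFinset v).image fun w => c s(v, w)

theorem mem_colorsAt {i : Fin k} {v : V} :
    i ∈ colorsAt G c v ↔ v ∈ (colorClassSubgraph G c i).verts := by
  simp [colorsAt, mem_colorClassSubgraph_verts]

theorem card_colorsAt_le_degree (v : V) : #(colorsAt G c v) ≤ G.degree v :=
  card_image_le

theorem IsConnectedEdgeColoring.sum_card_colorsAt_le [DecidableEq V]
    (hc : IsConnectedEdgeColoring G c) : ∑ v, #(colorsAt G c v) ≤ #G.edgeFinset + k := by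
  classical
  have hswap : ∑ v, #(colorsAt G c v) = ∑ i, (colorClassSubgraph G c i).verts.ncard := by
    have h := sum_card_bipartiteAbove_eq_sum_card_bipartiteBelow (s := univ) (t := univ)
      (r := fun v i => v ∈ (colorClassSubgraph G c i).verts)
    convert h using 3 with v _ i _
    · ext i
      simp [bipartiteAbove, mem_colorsAt]
    · rw [← Set.ncard_coe_finset]
      congr
      ext v
      simp [bipartiteBelow]
  have hedges : ∑ i : Fin k, (colorClassSubgraph G c i).edgeSet.ncard = #G.edgeFinset := by
    rw [card_eq_sum_card_fiberwise (f := c) (t := univ) fun _ _ => mem_univ _]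
    refine sum_congr rfl fun i _ => ?_
    rw [colorClassSubgraph_edgeSet, ← Set.ncard_coe_finset, coe_filter]
    simp only [mem_edgeFinset]
  calc ∑ v, #(colorsAt G c v) = ∑ i, (colorClassSubgraph G c i).verts.ncard := hswap
    _ ≤ ∑ i : Fin k, ((colorClassSubgraph G c i).edgeSet.ncard + 1) :=
      sum_le_sum fun i _ => (hc i).ncard_verts_le_ncard_edgeSet_add_one_s3
    _ = #G.edgeFinset + k := by simp [sum_add_distrib, hedges]

theorem IsCompleteEdgeColoring.exists_mem_colorsAt (hc : IsCompleteEdgeColoring G c)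
    (i j : Fin k) : ∃ v, i ∈ colorsAt G c v ∧ j ∈ colorsAt G c v := by
  simp only [mem_colorsAt, mem_colorClassSubgraph_verts]
  obtain rfl | hij := eq_or_ne i j
  · obtain ⟨e, he, rfl⟩ := hc.1 i
    induction e using Sym2.ind with
    | _ u v => exact ⟨u, ⟨v, he, rfl⟩, ⟨v, he, rfl⟩⟩
  · obtain ⟨u, v, w, huv, huw, rfl, rfl⟩ := hc.2 i j hij
    exact ⟨u, ⟨v, huv, rfl⟩, ⟨w, huw, rfl⟩⟩

theorem IsCompleteEdgeColoring.mul_self_le [DecidableEq V] (hc : IsCompleteEdgeColoring G c)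
    (hconn : IsConnectedEdgeColoring G c) {d : ℕ} (hd : ∀ v, G.degree v ≤ d) :
    k * k ≤ d * (#G.edgeFinset + k) := by
  have hcover : (univ : Finset (Fin k × Fin k)) ⊆
      univ.biUnion fun v => colorsAt G c v ×ˢ colorsAt G c v := fun p _ => by
    obtain ⟨v, hv⟩ := hc.exists_mem_colorsAt p.1 p.2
    exact mem_biUnion.2 ⟨v, mem_univ v, mem_product.2 hv⟩
  calc k * k = #(univ : Finset (Fin k × Fin k)) := by simp
    _ ≤ ∑ v, #(colorsAt G c v) * #(colorsAt G c v) := by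
      simpa only [card_product] using (card_le_card hcover).trans card_biUnion_le
    _ ≤ ∑ v, d * #(colorsAt G c v) :=
      sum_le_sum fun v _ => Nat.mul_le_mul_right _ ((card_colorsAt_le_degree v).trans (hd v))
    _ = d * ∑ v, #(colorsAt G c v) := (mul_sum ..).symm
    _ ≤ d * (#G.edgeFinset + k) := Nat.mul_le_mul_left d hconn.sum_card_colorsAt_le

end SimpleGraph

theorem connectedPseudoachromaticIndex_mul_self_le (n : ℕ) :
    connectedPseudoachromaticIndex n * connectedPseudoachromaticIndex n ≤
      n * (n.choose 2 + connectedPseudoachromaticIndex n) := by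
  obtain ⟨c, hc, hconn⟩ | h :
      connectedPseudoachromaticIndex n ∈ _ ∨ connectedPseudoachromaticIndex n = 0 :=
    Nat.sSup_mem_or_eq_zero _
  · have := hc.mul_self_le hconn (d := n) fun v => by simp
    rwa [card_edgeFinset_top_eq_card_choose_two, Fintype.card_fin] at this
  · simp [h]

theorem connectedPseudoachromaticIndex_le_sqrt (n : ℕ) :
    (connectedPseudoachromaticIndex n : ℝ) ≤ √n ^ 3 / √2 + √n ^ 2 := by
  have hψ := (Nat.cast_le (α := ℝ)).2 (connectedPseudoachromaticIndex_mul_self_le n)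
  push_cast [Nat.cast_choose_two] at hψ
  refine le_add_of_sq_le_sq_add_mul (by positivity) (by positivity) ?_
  rw [← Real.sq_sqrt n.cast_nonneg] at hψ
  rw [div_pow, Real.sq_sqrt zero_le_two]
  nlinarith [pow_nonneg (Real.sqrt_nonneg (n : ℝ)) 4]

theorem connectedPseudoachromaticIndex_div_rpow_le {n : ℕ} (hn : 0 < n) :
    (connectedPseudoachromaticIndex n : ℝ) / (n : ℝ) ^ ((3 : ℝ) / 2) ≤ 1 / √2 + 1 / √n := by
  have hs : 0 < √(n : ℝ) := Real.sqrt_pos.2 (Nat.cast_pos.2 hn)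
  rw [Real.rpow_div_two_eq_sqrt _ n.cast_nonneg, Real.rpow_ofNat, div_le_iff₀ (by positivity)]
  calc (connectedPseudoachromaticIndex n : ℝ) ≤ √n ^ 3 / √2 + √n ^ 2 :=
        connectedPseudoachromaticIndex_le_sqrt n
    _ = (1 / √2 + 1 / √n) * √n ^ 3 := by field_simp

theorem limsup_connected_pseudoachromatic_index_le :
    Filter.limsup
      (fun n : ℕ => (connectedPseudoachromaticIndex n : ℝ) / (n : ℝ) ^ ((3 : ℝ) / 2))
      Filter.atTop ≤ 1 / Real.sqrt 2 := by
  have hbound : Tendsto (fun n : ℕ => 1 / √2 + 1 / √(n : ℝ)) atTop (𝓝 (1 / √2)) := by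
    simpa using tendsto_const_nhds.add
      (tendsto_inv_atTop_zero.comp (Real.tendsto_sqrt_atTop.comp tendsto_natCast_atTop_atTop))
  calc limsup _ atTop ≤ limsup (fun n : ℕ => 1 / √2 + 1 / √(n : ℝ)) atTop :=
        limsup_le_limsup
          (eventually_atTop.2 ⟨1, fun n hn => connectedPseudoachromaticIndex_div_rpow_le hn⟩)
          (isCoboundedUnder_le_of_le atTop fun n => by positivity) hbound.isBoundedUnder_le
    _ = 1 / √2 := hbound.limsup_eq
end

section
/- Let n ≥ 8 be a real number and define, for x > 0, f_n(x) = n(n-1)/(2x) and g_n(x) = (x+1)(n - x - 1/2). Suppose x₀ and x₁ are positive reals with x₀ < x₁ such that f_n(x₀) = g_n(x₀) and f_n(x₁) = g_n(x₁). Then min{f_n(x), g_n(x)} ≤ f_n(x₀) for every real x > 0 (so f_n(x₀) = g_n(x₀) is the maximum of min{f_n, g_n} over the positive reals), and moreover x₀ = √(n/2 + 1/16) − 1/4. -/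
/-!
Clearing the denominator, `f x = g x` for `x ≠ 0` factors as `(2x² + x - n)(x + 1 - n) = 0`.
The positive root `r` of `2x² + x = n` lies below `n - 1`, so of two positive crossings the
smaller one is `r`, and solving the quadratic gives `r = √(n/2 + 1/16) - 1/4`. For `n ≥ 8` we
have `r ≥ 3/2`, which puts the vertex `(n - 3/2)/2` of the parabola `g` to the right of `r`:
so `g` increases on `(-∞, r]` while `f` decreases on `[r, ∞)`, and `min f g ≤ f r` everywhere.
-/

open Set

theorem min_le_of_antitoneOn_of_monotoneOn {α β : Type*} [LinearOrder α] [LinearOrder β]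
    {f g : α → β} {a : α} (hf : AntitoneOn f (Ici a)) (hg : MonotoneOn g (Iic a))
    (ha : f a = g a) (x : α) : min (f x) (g x) ≤ f a := by
  rcases le_total x a with hxa | hax
  · exact (min_le_right _ _).trans (ha ▸ hg hxa self_mem_Iic hxa)
  · exact (min_le_left _ _).trans (hf self_mem_Ici hax hax)

theorem antitoneOn_const_div_two_mul {c a : ℝ} (hc : 0 ≤ c) (ha : 0 < a) :
    AntitoneOn (fun x => c / (2 * x)) (Ici a) := fun x hx _ _ hxy =>
  div_le_div_of_nonneg_left hc (by linarith [mem_Ici.1 hx]) (by linarith)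

theorem monotoneOn_add_one_mul {n a : ℝ} (ha : 2 * a ≤ n - 3 / 2) :
    MonotoneOn (fun x => (x + 1) * (n - x - 1 / 2)) (Iic a) := by
  intro x hx y hy hxy
  have key : (y + 1) * (n - y - 1 / 2) - (x + 1) * (n - x - 1 / 2)
      = (y - x) * (n - 3 / 2 - x - y) := by ring
  show _ ≤ _
  rw [← sub_nonneg, key]
  exact mul_nonneg (sub_nonneg.2 hxy) (by linarith [mem_Iic.1 hx, mem_Iic.1 hy])

theorem crossing_factor {n x : ℝ} (hx : x ≠ 0)
    (h : n * (n - 1) / (2 * x) = (x + 1) * (n - x - 1 / 2)) :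
    (2 * x ^ 2 + x - n) * (x + 1 - n) = 0 := by
  field_simp at h
  linear_combination h

theorem lt_sub_one_of_two_mul_sq_add_self_eq {n x : ℝ} (hn : 2 ≤ n)
    (h : 2 * x ^ 2 + x = n) : x < n - 1 := by
  nlinarith

theorem eq_sqrt_of_two_mul_sq_add_self_eq {n x : ℝ} (hx : -(1 / 4) ≤ x)
    (h : 2 * x ^ 2 + x = n) : x = Real.sqrt (n / 2 + 1 / 16) - 1 / 4 := by
  have hsq : n / 2 + 1 / 16 = (x + 1 / 4) ^ 2 := by linear_combination -h / 2
  rw [hsq, Real.sqrt_sq (by linarith)]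
  ring

theorem two_mul_sq_add_self_eq_of_crossings {n x₀ x₁ : ℝ} (hn : 2 ≤ n) (hx₀ : 0 < x₀)
    (hlt : x₀ < x₁) (h₀ : n * (n - 1) / (2 * x₀) = (x₀ + 1) * (n - x₀ - 1 / 2))
    (h₁ : n * (n - 1) / (2 * x₁) = (x₁ + 1) * (n - x₁ - 1 / 2)) :
    2 * x₀ ^ 2 + x₀ = n := by
  rcases mul_eq_zero.1 (crossing_factor hx₀.ne' h₀) with hx₀_root | hx₀_eq
  · linarith
  · rcases mul_eq_zero.1 (crossing_factor (hx₀.trans hlt).ne' h₁) with hx₁_root | hx₁_eq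
    · linarith [lt_sub_one_of_two_mul_sq_add_self_eq hn (x := x₁) (by linarith)]
    · linarith

theorem min_max_lemma_general
    (n : ℝ) (hn : 8 ≤ n)
    (f g : ℝ → ℝ)
    (hf : ∀ x : ℝ, f x = n * (n - 1) / (2 * x))
    (hg : ∀ x : ℝ, g x = (x + 1) * (n - x - 1 / 2))
    (x₀ x₁ : ℝ) (hx₀ : 0 < x₀) (hlt : x₀ < x₁)
    (h₀ : f x₀ = g x₀) (h₁ : f x₁ = g x₁) :
    (∀ x : ℝ, 0 < x → min (f x) (g x) ≤ f x₀) ∧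
      x₀ = Real.sqrt (n / 2 + 1 / 16) - 1 / 4 := by
  obtain rfl : f = fun x => n * (n - 1) / (2 * x) := funext hf
  obtain rfl : g = fun x => (x + 1) * (n - x - 1 / 2) := funext hg
  have hroot := two_mul_sq_add_self_eq_of_crossings (by linarith) hx₀ hlt h₀ h₁
  have hx₀_ge_three_halves : 3 / 2 ≤ x₀ := by nlinarith
  have hf_anti := antitoneOn_const_div_two_mul (c := n * (n - 1)) (by nlinarith) hx₀
  have hg_mono := monotoneOn_add_one_mul (n := n) (a := x₀) (by nlinarith)
  exact ⟨fun x _ => min_le_of_antitoneOn_of_monotoneOn hf_anti hg_mono h₀ x,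
    eq_sqrt_of_two_mul_sq_add_self_eq (by linarith) hroot⟩

theorem min_max_lemma
    (n : ℝ) (hn : 8 ≤ n)
    (f g : ℝ → ℝ)
    (hf : ∀ x : ℝ, f x = n * (n - 1) / (2 * x))
    (hg : ∀ x : ℝ, g x = (x + 1) * (n - x - 1 / 2))
    (x₀ x₁ : ℝ) (hx₀ : 0 < x₀) (hx₁ : 0 < x₁) (hlt : x₀ < x₁)
    (h₀ : f x₀ = g x₀) (h₁ : f x₁ = g x₁) :
    (∀ x : ℝ, 0 < x → min (f x) (g x) ≤ f x₀) ∧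
      x₀ = Real.sqrt (n / 2 + 1 / 16) - 1 / 4 :=
  min_max_lemma_general n hn f g hf hg x₀ x₁ hx₀ hlt h₀ h₁
end

section
/- Let G be a connected finite simple graph and let H be a connected subgraph of G. If H admits a connected and complete k-coloring of its vertices, then G admits a connected and complete k-coloring of its vertices; consequently ψ_c(H) ≤ ψ_c(G). -/
open SimpleGraph

/-- `c` is a complete vertex `k`-coloring of `G`: it is surjective onto the `k` colors and
every two distinct colors appear on the ends of some edge. -/
def IsCompleteColoring {V : Type*} {k : ℕ} (G : SimpleGraph V) (c : V → Fin k) : Prop :=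
  Function.Surjective c ∧
    ∀ i j : Fin k, i ≠ j → ∃ u v : V, G.Adj u v ∧ c u = i ∧ c v = j

/-- `c` is a connected vertex coloring of `G`: every color class induces a connected
subgraph. -/
def IsConnectedColoring {V : Type*} {k : ℕ} (G : SimpleGraph V) (c : V → Fin k) : Prop :=
  ∀ i : Fin k, (G.induce (c ⁻¹' {i})).Connected

/-- The connected-pseudoachromatic number of `G`. -/
noncomputable def connPseudoachromatic {V : Type*} (G : SimpleGraph V) : ℕ :=
  sSup {k : ℕ | ∃ c : V → Fin k, IsCompleteColoring G c ∧ IsConnectedColoring G c}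

/-!
A connected complete coloring of `H` is extended to all of `G` one vertex at a time: while some
vertex is uncolored, connectedness of `G` gives an edge from a colored vertex `u` to an
uncolored vertex `v`, and `v` receives the color of `u`. Each color class stays connected, and
the edges of `H` witnessing completeness are edges of `G`. Since a complete `k`-coloring of `G`
is onto, `k ≤ |V(G)|`, so the supremum defining `ψ_c(G)` is over a bounded set.
-/

namespace SimpleGraph

variable {V : Type*} {G : SimpleGraph V}

lemma connected_induce_insert_of_adj {s : Set V} {u v : V} (hs : (G.induce s).Connected)
    (hu : u ∈ s) (huv : G.Adj u v) : (G.induce (insert v s)).Connected := by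
  rw [Set.insert_eq, Set.union_comm]
  exact connected_induce_union hs.preconnected Preconnected.of_subsingleton hu rfl huv

lemma connected_induce_preimage_update_insert {ι : Type*} [DecidableEq V] {c : V → ι}
    {T : Set V} {u v : V} (hc : ∀ i, (G.induce (c ⁻¹' {i} ∩ T)).Connected) (hu : u ∈ T)
    (hv : v ∉ T) (huv : G.Adj u v) (i : ι) :
    (G.induce (Function.update c v (c u) ⁻¹' {i} ∩ insert v T)).Connected := by
  by_cases hi : i = c u
  · have hS :
        Function.update c v (c u) ⁻¹' {i} ∩ insert v T = insert v (c ⁻¹' {i} ∩ T) := by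
      ext x
      rcases eq_or_ne x v with rfl | hx <;> simp [*]
    rw [hS]
    exact connected_induce_insert_of_adj (hc i) ⟨hi.symm, hu⟩ huv
  · have hS : Function.update c v (c u) ⁻¹' {i} ∩ insert v T = c ⁻¹' {i} ∩ T := by
      ext x
      rcases eq_or_ne x v with rfl | hx <;> simp [*, Ne.symm hi]
    rw [hS]
    exact hc i

theorem exists_extend_connected_classes [Finite V] {ι : Type*} (hG : G.Connected) (T : Set V)
    (c : V → ι) (hc : ∀ i, (G.induce (c ⁻¹' {i} ∩ T)).Connected) :
    ∃ c' : V → ι, Set.EqOn c' c T ∧ ∀ i, (G.induce (c' ⁻¹' {i})).Connected := by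
  classical
  by_cases hT : T = Set.univ
  · subst hT
    exact ⟨c, Set.eqOn_refl c _, fun i => by rw [← Set.inter_univ (c ⁻¹' {i})]; exact hc i⟩
  obtain ⟨b, hb⟩ := Set.ne_univ_iff_exists_notMem T |>.mp hT
  obtain ⟨⟨a, -, ha⟩⟩ := (hc (c b)).nonempty
  obtain ⟨p⟩ := hG.preconnected a b
  obtain ⟨d, -, hdT, hdT'⟩ := p.exists_boundary_dart T ha hb
  -- decreasing measure for the recursive call
  have hlt : (insert d.snd T)ᶜ.ncard < Tᶜ.ncard :=
    Set.ncard_lt_ncard (compl_lt_compl_iff_lt.mpr (Set.ssubset_insert hdT'))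
  obtain ⟨c', hc'T, hc'⟩ := exists_extend_connected_classes hG (insert d.snd T)
    (Function.update c d.snd (c d.fst))
    (connected_induce_preimage_update_insert hc hdT hdT' d.adj)
  refine ⟨c', fun x hx => ?_, hc'⟩
  rw [hc'T (Set.mem_insert_of_mem _ hx), Function.update_of_ne (ne_of_mem_of_not_mem hx hdT')]
termination_by Tᶜ.ncard

lemma connected_induce_image_val {H : G.Subgraph} {s : Set H.verts}
    (hs : (H.coe.induce s).Connected) : (G.induce (Subtype.val '' s)).Connected :=
  hs.map ⟨fun x => ⟨x.1.1, x.1, x.2, rfl⟩, fun h => H.adj_sub h⟩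
    (by rintro ⟨_, y, hy, rfl⟩; exact ⟨⟨y, hy⟩, rfl⟩)

end SimpleGraph

lemma IsCompleteColoring.of_comp_hom {V W : Type*} {G : SimpleGraph V} {G' : SimpleGraph W}
    {k : ℕ} (f : G' →g G) {c : V → Fin k} (hc : IsCompleteColoring G' (c ∘ f)) :
    IsCompleteColoring G c := by
  refine ⟨hc.1.of_comp, fun i j hij => ?_⟩
  obtain ⟨u, v, huv, hu, hv⟩ := hc.2 i j hij
  exact ⟨f u, f v, f.map_rel huv, hu, hv⟩

theorem exists_connected_complete_coloring_of_subgraph {V : Type*} [Finite V]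
    {G : SimpleGraph V} (hG : G.Connected) {H : G.Subgraph} (hH : H.verts.Nonempty) {k : ℕ}
    {c : H.verts → Fin k} (hc : IsCompleteColoring H.coe c)
    (hconn : IsConnectedColoring H.coe c) :
    ∃ c' : V → Fin k, IsCompleteColoring G c' ∧ IsConnectedColoring G c' := by
  obtain ⟨y, hy⟩ := hH
  set c₀ : V → Fin k := Function.extend Subtype.val c fun _ => c ⟨y, hy⟩
  have hc₀ (x : H.verts) : c₀ x = c x := Subtype.val_injective.extend_apply _ _ x
  have hclass (i : Fin k) : c₀ ⁻¹' {i} ∩ H.verts = Subtype.val '' (c ⁻¹' {i}) := by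
    ext x
    constructor
    · rintro ⟨hx, hxH⟩
      exact ⟨⟨x, hxH⟩, (hc₀ ⟨x, hxH⟩).symm.trans hx, rfl⟩
    · rintro ⟨x, hx, rfl⟩
      exact ⟨(hc₀ x).trans hx, x.2⟩
  obtain ⟨c', hc'H, hc'⟩ := exists_extend_connected_classes hG H.verts c₀
    fun i => hclass i ▸ connected_induce_image_val (hconn i)
  have hcomp : c' ∘ H.hom = c := funext fun x => (hc'H x.2).trans (hc₀ x)
  exact ⟨c', .of_comp_hom H.hom (hcomp ▸ hc), hc'⟩

lemma connPseudoachromatic_le_of_forall_exists {V W : Type*} [Finite V] {G : SimpleGraph V}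
    {G' : SimpleGraph W}
    (h : ∀ (k : ℕ) (c : W → Fin k), IsCompleteColoring G' c ∧ IsConnectedColoring G' c →
      ∃ c' : V → Fin k, IsCompleteColoring G c' ∧ IsConnectedColoring G c') :
    connPseudoachromatic G' ≤ connPseudoachromatic G := by
  have hbdd : BddAbove
      {k : ℕ | ∃ c : V → Fin k, IsCompleteColoring G c ∧ IsConnectedColoring G c} :=
    ⟨Nat.card V, fun k ⟨c, hc, _⟩ => by simpa using Nat.card_le_card_of_surjective c hc.1⟩
  exact csSup_le_csSup' hbdd fun k ⟨c, hc⟩ => h k c hc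

theorem connPseudoachromatic_mono_of_connected_subgraph
    {V : Type*} [Fintype V] (G : SimpleGraph V) (hG : G.Connected)
    (H : G.Subgraph) (hH : H.Connected) :
    (∀ (k : ℕ) (c : H.verts → Fin k),
      IsCompleteColoring H.coe c ∧ IsConnectedColoring H.coe c →
        ∃ c' : V → Fin k, IsCompleteColoring G c' ∧ IsConnectedColoring G c') ∧
      connPseudoachromatic H.coe ≤ connPseudoachromatic G := by
  have hextend (k : ℕ) (c : H.verts → Fin k)
      (hc : IsCompleteColoring H.coe c ∧ IsConnectedColoring H.coe c) :
      ∃ c' : V → Fin k, IsCompleteColoring G c' ∧ IsConnectedColoring G c' :=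
    exists_connected_complete_coloring_of_subgraph hG hH.nonempty hc.1 hc.2
  exact ⟨hextend, connPseudoachromatic_le_of_forall_exists hextend⟩
end

section
/- For all integers 2 ≤ m ≤ n, if the complete graph K_m admits a connected and complete k-edge-coloring, then K_n admits a connected and complete k-edge-coloring; that is, ψ'_c(K_m) ≤ ψ'_c(K_n). -/
open SimpleGraph

/-!
Along an embedding `f : V ↪ W`, pull a coloring of `K_V` back by a retraction `p : W → V`:
an edge between different fibres of `p` gets the color of its image, an edge inside the fibre
over `x` the color of `s(x, q x)` for a fixed `q x ≠ x`. The copy `f(V)` of `K_V` keeps its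
coloring, which gives completeness, and every edge at `u` has the same color as some edge from
`u` to the copy, so each color class is the connected image of the old one plus pendant edges.
The index is then monotone because the number of colors of a complete coloring is bounded by
the number of unordered pairs of vertices.
-/

variable {V W : Type*} {k : ℕ}

theorem IsCompleteEdgeColoring.le_card_sym2 [Finite V] {G : SimpleGraph V} {c : Sym2 V → Fin k}
    (hc : IsCompleteEdgeColoring G c) : k ≤ Nat.card (Sym2 V) := by
  have hsurj : Function.Surjective c := fun i =>
    let ⟨e, _, he⟩ := hc.1 i
    ⟨e, he⟩
  simpa using Nat.card_le_card_of_surjective c hsurj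

theorem bddAbove_setOf_isCompleteEdgeColoring [Finite V] (G : SimpleGraph V) :
    BddAbove {k : ℕ | ∃ c : Sym2 V → Fin k, IsCompleteEdgeColoring G c} :=
  ⟨Nat.card (Sym2 V), fun _ ⟨_, hc⟩ => hc.le_card_sym2⟩

section Transfer

variable {G : SimpleGraph V} {H : SimpleGraph W} (φ : G →g H) {c : Sym2 V → Fin k}
  {c' : Sym2 W → Fin k}

theorem IsCompleteEdgeColoring.of_hom (hφ : ∀ e ∈ G.edgeSet, c' (e.map φ) = c e)
    (hc : IsCompleteEdgeColoring G c) : IsCompleteEdgeColoring H c' := by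
  refine ⟨fun i => ?_, fun i j hij => ?_⟩
  · obtain ⟨e, he, rfl⟩ := hc.1 i
    exact ⟨e.map φ, φ.map_mem_edgeSet he, hφ e he⟩
  · obtain ⟨u, v, w, huv, huw, rfl, rfl⟩ := hc.2 i j hij
    refine ⟨φ u, φ v, φ w, φ.map_adj huv, φ.map_adj huw, ?_, ?_⟩
    · rw [← Sym2.map_mk, hφ _ huv]
    · rw [← Sym2.map_mk, hφ _ huw]

theorem colorClassSubgraph_map_le (hφ : ∀ e ∈ G.edgeSet, c' (e.map φ) = c e) (i : Fin k) :
    (colorClassSubgraph G c i).map φ ≤ colorClassSubgraph H c' i := by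
  constructor
  · rintro _ ⟨x, ⟨y, hxy, rfl⟩, rfl⟩
    exact ⟨φ y, φ.map_adj hxy, by rw [← Sym2.map_mk, hφ _ hxy]⟩
  · rintro _ _ ⟨x, y, ⟨hxy, rfl⟩, rfl, rfl⟩
    exact ⟨φ.map_adj hxy, by rw [← Sym2.map_mk, hφ _ hxy]⟩

end Transfer

theorem SimpleGraph.Subgraph.Connected.of_map_le {G : SimpleGraph V} {H : SimpleGraph W}
    {φ : G →g H} {S : G.Subgraph} {S' : H.Subgraph} (hS : S.Connected) (hle : S.map φ ≤ S')
    (hnear : ∀ u ∈ S'.verts, ∃ x ∈ S.verts, S'.Adj u (φ x)) : S'.Connected := by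
  let ψ : S.coe →g S'.coe :=
    { toFun x := ⟨φ x, hle.1 ⟨x, x.2, rfl⟩⟩
      map_rel' h := hle.2 ⟨_, _, h, rfl, rfl⟩ }
  have hreach : ∀ u : S'.verts, ∃ x, S'.coe.Reachable u (ψ x) := fun ⟨u, hu⟩ =>
    let ⟨x, hx, hux⟩ := hnear u hu
    ⟨⟨x, hx⟩, Adj.reachable hux⟩
  rw [Subgraph.connected_iff]
  refine ⟨⟨fun u v => ?_⟩, hS.nonempty.image φ |>.mono hle.1⟩
  obtain ⟨x, hux⟩ := hreach u
  obtain ⟨y, hvy⟩ := hreach v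
  exact hux.trans (((hS x y).map ψ).trans hvy.symm)

section Pullback

variable [DecidableEq V] (c : Sym2 V → Fin k) (p : W → V) (q : V → V)

def pullbackColoring : Sym2 W → Fin k :=
  Sym2.lift ⟨fun u v => if p u = p v then c s(p u, q (p u)) else c s(p u, p v), fun u v => by
    dsimp only
    by_cases h : p u = p v
    · rw [if_pos h, if_pos h.symm, h]
    · rw [if_neg h, if_neg (Ne.symm h), Sym2.eq_swap]⟩

variable {c p q}

theorem pullbackColoring_mk_of_ne {u v : W} (h : p u ≠ p v) :
    pullbackColoring c p q s(u, v) = c s(p u, p v) := by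
  simp [pullbackColoring, h]

theorem exists_pullbackColoring_mk_eq (hq : ∀ x, q x ≠ x) (u v : W) :
    ∃ y ≠ p u, pullbackColoring c p q s(u, v) = c s(p u, y) := by
  by_cases h : p u = p v
  · exact ⟨q (p u), hq _, by simp [pullbackColoring, h]⟩
  · exact ⟨p v, Ne.symm h, pullbackColoring_mk_of_ne h⟩

theorem pullbackColoring_mk_of_leftInverse {f : V → W} (hpf : Function.LeftInverse p f)
    {u : W} {y : V} (hy : y ≠ p u) : pullbackColoring c p q s(u, f y) = c s(p u, y) := by
  rw [pullbackColoring_mk_of_ne (by rwa [hpf y, ne_comm]), hpf y]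

end Pullback

theorem exists_connected_complete_of_embedding [Nontrivial V] (f : V ↪ W)
    {c : Sym2 V → Fin k} (hcomp : IsCompleteEdgeColoring ⊤ c)
    (hconn : IsConnectedEdgeColoring ⊤ c) :
    ∃ c' : Sym2 W → Fin k,
      IsCompleteEdgeColoring ⊤ c' ∧ IsConnectedEdgeColoring ⊤ c' := by
  classical
  choose q hq using fun x : V => exists_ne x
  have hpf : Function.LeftInverse (Function.invFun f) f :=
    Function.leftInverse_invFun f.injective
  set c' := pullbackColoring c (Function.invFun f) q
  let φ := (SimpleGraph.Embedding.completeGraph f).toHom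
  have hφ : ∀ e ∈ (⊤ : SimpleGraph V).edgeSet, c' (e.map φ) = c e := by
    refine Sym2.ind fun x y (hxy : x ≠ y) => ?_
    have h := pullbackColoring_mk_of_leftInverse (c := c) (q := q) hpf (u := f x) (y := y)
      (by rwa [hpf x, ne_comm])
    rwa [hpf x] at h
  refine ⟨c', hcomp.of_hom φ hφ, fun i =>
    (hconn i).of_map_le (colorClassSubgraph_map_le φ hφ i) ?_⟩
  rintro u ⟨v, -, rfl⟩
  obtain ⟨y, hy, hcy⟩ := exists_pullbackColoring_mk_eq (c := c) hq u v
  refine ⟨y, ⟨_, hy, by rw [Sym2.eq_swap, ← hcy]⟩, fun h => hy ?_, ?_⟩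
  · rw [h]
    exact (hpf y).symm
  · exact (pullbackColoring_mk_of_leftInverse hpf hy).trans hcy.symm

theorem connectedPseudoachromaticIndex_monotone
    (m n : ℕ) (hm : 2 ≤ m) (hmn : m ≤ n) :
    (∀ (k : ℕ) (c : Sym2 (Fin m) → Fin k),
      IsCompleteEdgeColoring (⊤ : SimpleGraph (Fin m)) c ∧
        IsConnectedEdgeColoring (⊤ : SimpleGraph (Fin m)) c →
          ∃ c' : Sym2 (Fin n) → Fin k,
            IsCompleteEdgeColoring (⊤ : SimpleGraph (Fin n)) c' ∧
              IsConnectedEdgeColoring (⊤ : SimpleGraph (Fin n)) c') ∧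
      connectedPseudoachromaticIndex m ≤ connectedPseudoachromaticIndex n := by
  have : Nontrivial (Fin m) := Fin.nontrivial_iff_two_le.mpr hm
  have hextend : ∀ (k : ℕ) (c : Sym2 (Fin m) → Fin k),
      IsCompleteEdgeColoring ⊤ c ∧ IsConnectedEdgeColoring ⊤ c →
        ∃ c' : Sym2 (Fin n) → Fin k,
          IsCompleteEdgeColoring ⊤ c' ∧ IsConnectedEdgeColoring ⊤ c' :=
    fun _ _ hc => exists_connected_complete_of_embedding (Fin.castLEEmb hmn) hc.1 hc.2
  refine ⟨hextend, csSup_le_csSup' ?_ ?_⟩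
  · exact (bddAbove_setOf_isCompleteEdgeColoring ⊤).mono fun _ => Exists.imp fun _ => And.left
  · rintro k ⟨c, hc⟩
    exact hextend k c hc
end

section
/- Let q be a prime power and let n = q² + q + 1. Then the complete graph K_n admits a connected and complete k-edge-coloring with k = ⌈q/2⌉ · n colors; that is, ⌈q/2⌉ · (q² + q + 1) ≤ ψ'_c(K_n). -/
open SimpleGraph

/-!
Take the projective plane `PG(2, q)` over a field with `q` elements: it has `n = q² + q + 1`
points and as many lines, every line has `q + 1` points, two points lie on exactly one line and
two lines always meet. So the edges of `K_n` split into one `K_{q+1}` per line. Colour each of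
these with its own palette of `⌈q / 2⌉ = ⌊(q + 1) / 2⌋` colours so that every colour class is a
connected spanning subgraph of that `K_{q+1}`: on `ZMod (q + 1)`, give `s(x, y)` the colour `j`
when `x + y ∈ {2 j, 2 j + 1}`. This uses `⌈q / 2⌉ · n` colours, every class is connected, and two
classes are adjacent because their lines share a point, which both classes span.
-/

def IsSpanningConnectedEdgeColoring {V : Type*} {k : ℕ} (G : SimpleGraph V)
    (c : Sym2 V → Fin k) : Prop :=
  ∀ i : Fin k, (colorClassSubgraph G c i).IsSpanning ∧ (colorClassSubgraph G c i).Connected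

namespace SimpleGraph

variable {V V' : Type*} {G : SimpleGraph V} {G' : SimpleGraph V'}

protected lemma Subgraph.Connected.map_hom {H : G.Subgraph} (f : G →g G') (h : H.Connected) :
    (H.map f).Connected := by
  rw [Subgraph.connected_iff] at h ⊢
  refine ⟨?_, h.2.image f⟩
  rw [Subgraph.preconnected_iff]
  rintro ⟨_, u, hu, rfl⟩ ⟨_, v, hv, rfl⟩
  let g : H.coe →g (H.map f).coe :=
    ⟨fun x => ⟨f x, Set.mem_image_of_mem f x.2⟩, fun {x y} hxy => ⟨x, y, hxy, rfl, rfl⟩⟩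
  exact (h.1.coe ⟨u, hu⟩ ⟨v, hv⟩).map g

lemma Subgraph.IsSpanning.connected_iff {H : G.Subgraph} (h : H.IsSpanning) :
    H.Connected ↔ H.spanningCoe.Connected := by
  rw [Subgraph.connected_iff', (H.spanningCoeEquivCoeOfSpanning h).connected_iff]

lemma connected_of_reachable_add_one {m : ℕ} [NeZero m] {G : SimpleGraph (ZMod m)}
    (h : ∀ x, G.Reachable x (x + 1)) : G.Connected := by
  have hreach : ∀ t : ℕ, G.Reachable 0 t := by
    intro t
    induction t with
    | zero => simp
    | succ t ih => simpa using ih.trans (h t)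
  rw [connected_iff_exists_forall_reachable]
  exact ⟨0, fun x => by simpa using hreach x.val⟩

end SimpleGraph

lemma IsCompleteEdgeColoring.card_le {V : Type*} [Finite V] {k : ℕ} {G : SimpleGraph V}
    {c : Sym2 V → Fin k} (hc : IsCompleteEdgeColoring G c) : k ≤ Nat.card (Sym2 V) := by
  simpa using Nat.card_le_card_of_surjective c fun i => (hc.1 i).imp fun _ he => he.2

lemma colorClassSubgraph_comp_map {V W : Type*} {k : ℕ} (c : Sym2 W → Fin k) (e : V ≃ W)
    (i : Fin k) :
    colorClassSubgraph ⊤ (c ∘ Sym2.map e) i =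
      (colorClassSubgraph ⊤ c i).map (Iso.completeGraph e.symm).toHom := by
  ext u v
  · simp only [colorClassSubgraph, Subgraph.map_verts, top_adj, Function.comp_apply,
      Sym2.map_mk, Set.mem_ofPred_eq, Set.mem_image]
    show _ ↔ ∃ x, _ ∧ e.symm x = _
    constructor
    · rintro ⟨w, huw, hc⟩
      exact ⟨e u, ⟨e w, e.injective.ne huw, hc⟩, by simp⟩
    · rintro ⟨x, ⟨w, hxw, hc⟩, rfl⟩
      exact ⟨e.symm w, by simpa using hxw, by simpa using hc⟩
  · simp only [colorClassSubgraph, Subgraph.map_adj, top_adj, Function.comp_apply,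
      Sym2.map_mk, Relation.Map]
    show _ ↔ ∃ a b, _ ∧ e.symm a = u ∧ e.symm b = v
    constructor
    · rintro ⟨huv, hc⟩
      exact ⟨e u, e v, ⟨e.injective.ne huv, hc⟩, by simp, by simp⟩
    · rintro ⟨x, y, ⟨hxy, hc⟩, rfl, rfl⟩
      exact ⟨by simpa using hxy, by simpa using hc⟩

lemma IsCompleteEdgeColoring.comp_map {V W : Type*} {k : ℕ} {c : Sym2 W → Fin k}
    (hc : IsCompleteEdgeColoring ⊤ c) (e : V ≃ W) : IsCompleteEdgeColoring ⊤ (c ∘ Sym2.map e) := by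
  refine ⟨fun i => ?_, fun i j hij => ?_⟩
  · obtain ⟨⟨u, v⟩, huv, hc⟩ := hc.1 i
    exact ⟨s(e.symm u, e.symm v), by simpa using huv, by simpa using hc⟩
  · obtain ⟨u, v, w, huv, huw, hv, hw⟩ := hc.2 i j hij
    exact ⟨e.symm u, e.symm v, e.symm w, by simpa using huv, by simpa using huw,
      by simpa using hv, by simpa using hw⟩

lemma IsConnectedEdgeColoring.comp_map {V W : Type*} {k : ℕ} {c : Sym2 W → Fin k}
    (hc : IsConnectedEdgeColoring ⊤ c) (e : V ≃ W) :
    IsConnectedEdgeColoring ⊤ (c ∘ Sym2.map e) := fun i => by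
  rw [colorClassSubgraph_comp_map]
  exact (hc i).map_hom _

/-- `x + y` is read as its representative in `{0, …, m - 1}`; for `r = m / 2` the colour classes
are Walecki's zigzag Hamiltonian paths (plus, for odd `m`, a matching folded into colour `0`). -/
def halfSumColoring (r m : ℕ) [NeZero r] : Sym2 (ZMod m) → Fin r :=
  Sym2.lift ⟨fun x y => Fin.ofNat r ((x + y).val / 2), fun x y => by simp only [add_comm]⟩

section halfSumColoring

variable {r m : ℕ} [NeZero r]

lemma halfSumColoring_eq_of_add_eq (hrm : 2 * r ≤ m) {j : Fin r} {x y : ZMod m} {ε : ℕ}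
    (hε : ε < 2) (h : x + y = ((2 * j + ε : ℕ) : ZMod m)) : halfSumColoring r m s(x, y) = j := by
  have hlt : 2 * (j : ℕ) + ε < m := by omega
  ext
  simp only [halfSumColoring, Sym2.lift_mk, h, ZMod.val_cast_of_lt hlt, Fin.val_ofNat]
  rw [Nat.mod_eq_of_lt] <;> omega

theorem isSpanningConnectedEdgeColoring_halfSumColoring (hrm : 2 * r ≤ m) :
    IsSpanningConnectedEdgeColoring ⊤ (halfSumColoring r m) := by
  have : Fact (1 < m) := ⟨by have := NeZero.pos r; omega⟩
  intro j
  set H := colorClassSubgraph ⊤ (halfSumColoring r m) j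
  set a : ZMod m := ((2 * j : ℕ) : ZMod m)
  have hadj : ∀ x y, x ≠ y → x + y = a ∨ x + y = a + 1 → H.spanningCoe.Adj x y := by
    rintro x y hxy (h | h)
    · exact ⟨hxy, halfSumColoring_eq_of_add_eq hrm (ε := 0) (by norm_num) h⟩
    · exact ⟨hxy, halfSumColoring_eq_of_add_eq hrm (ε := 1) (by norm_num) (by simpa [a] using h)⟩
  have hspan : H.IsSpanning := by
    intro x
    by_cases hx : x = a - x
    · refine ⟨a + 1 - x, hadj _ _ (fun h => one_ne_zero (α := ZMod m) ?_) (by simp)⟩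
      linear_combination hx - h
    · exact ⟨a - x, hadj _ _ hx (by simp)⟩
  refine ⟨hspan, hspan.connected_iff.2 (connected_of_reachable_add_one fun x => ?_)⟩
  by_cases hx : x + (x + 1) = a ∨ x + (x + 1) = a + 1
  · exact (hadj _ _ (by simp) hx).reachable
  · push Not at hx
    -- otherwise `x` reaches `x + 1` through its reflection `a - x`
    have h1 : H.spanningCoe.Adj x (a - x) :=
      hadj _ _ (fun h => hx.2 (by linear_combination h)) (by simp)
    have h2 : H.spanningCoe.Adj (a - x) (x + 1) :=
      hadj _ _ (fun h => hx.1 (by linear_combination -h)) (by right; ring)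
    exact h1.reachable.trans h2.reachable

end halfSumColoring

namespace Configuration.ProjectivePlane

variable {P L : Type*} [Membership P L] [ProjectivePlane P L]

variable (L) in
lemma exists_line_mem (p : P) : ∃ l : L, p ∈ l := by
  obtain ⟨-, p₂, -, -, l₂, -, -, -, -, hp₂, -⟩ := @exists_config P L _ _
  by_cases h : p = p₂
  · exact ⟨l₂, h ▸ hp₂⟩
  · exact ⟨mkLine h, (mkLine_ax h).1⟩

variable (P) in
lemma exists_common_point (l l' : L) : ∃ p : P, p ∈ l ∧ p ∈ l' := by
  by_cases h : l = l'
  · -- a point on `l` is a line through `l` in the dual plane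
    obtain ⟨p, hp⟩ := exists_line_mem (Dual P) (P := Dual L) l
    exact ⟨p, hp, h ▸ hp⟩
  · exact ⟨HasPoints.mkPoint h, HasPoints.mkPoint_ax h⟩

variable (L) in
lemma exists_line_forall_mem (e : Sym2 P) : ∃ l : L, ∀ p ∈ e, p ∈ l := by
  induction e using Sym2.ind with
  | h u v =>
    by_cases h : u = v
    · obtain ⟨l, hl⟩ := exists_line_mem L u
      exact ⟨l, by simp [← h, hl]⟩
    · exact ⟨mkLine h, by simp [mkLine_ax h]⟩

variable (L) in
noncomputable def lineThrough (e : Sym2 P) : L :=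
  (exists_line_forall_mem L e).choose

lemma mem_lineThrough {e : Sym2 P} {p : P} (hp : p ∈ e) : p ∈ lineThrough L e :=
  (exists_line_forall_mem L e).choose_spec p hp

lemma lineThrough_eq_of_mem {u v : P} {l : L} (huv : u ≠ v) (hu : u ∈ l) (hv : v ∈ l) :
    lineThrough L s(u, v) = l :=
  (Nondegenerate.eq_or_eq (mem_lineThrough (Sym2.mem_mk_left u v))
    (mem_lineThrough (Sym2.mem_mk_right u v)) hu hv).resolve_left huv

section linewiseColoring

variable {W : Type*} {r k : ℕ}

noncomputable def linewiseColoring (φ : ∀ l : L, W ≃ {p : P // p ∈ l}) (w : Sym2 W → Fin r)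
    (e : Sym2 P) : Fin r × L :=
  (w ((e.attachWith fun _ => mem_lineThrough).map (φ (lineThrough L e)).symm), lineThrough L e)

variable (φ : ∀ l : L, W ≃ {p : P // p ∈ l}) (w : Sym2 W → Fin r)

lemma linewiseColoring_of_lineThrough_eq {e : Sym2 P} {l : L} (hl : lineThrough L e = l) :
    linewiseColoring φ w e =
      (w ((e.attachWith fun _ hp => hl ▸ mem_lineThrough hp).map (φ l).symm), l) := by
  subst hl
  rfl

lemma linewiseColoring_mk {l : L} {x y : W} (hxy : x ≠ y) :
    linewiseColoring φ w s((φ l x : P), φ l y) = (w s(x, y), l) := by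
  have hne : (φ l x : P) ≠ φ l y := (Subtype.val_injective.comp (φ l).injective).ne hxy
  rw [linewiseColoring_of_lineThrough_eq φ w
    (lineThrough_eq_of_mem hne (φ l x).2 (φ l y).2)]
  simp [Sym2.attachWith, Sym2.pmap_pair]

lemma mem_of_linewiseColoring_eq {e : Sym2 P} {j : Fin r} {l : L}
    (h : linewiseColoring φ w e = (j, l)) {p : P} (hp : p ∈ e) : p ∈ l := by
  have hl : lineThrough L e = l := (Prod.ext_iff.1 h).2
  exact hl ▸ mem_lineThrough hp

variable (eK : Fin r × L ≃ Fin k)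

lemma colorClassSubgraph_linewiseColoring_adj {j : Fin r} {x y : W}
    (h : (colorClassSubgraph ⊤ w j).Adj x y) (l : L) :
    (colorClassSubgraph ⊤ (eK ∘ linewiseColoring φ w) (eK (j, l))).Adj (φ l x) (φ l y) := by
  obtain ⟨hxy, hc⟩ := h
  refine ⟨(Subtype.val_injective.comp (φ l).injective).ne hxy, ?_⟩
  rw [Function.comp_apply, linewiseColoring_mk φ w hxy, hc]

lemma colorClassSubgraph_linewiseColoring_verts {j : Fin r}
    (hw : (colorClassSubgraph ⊤ w j).IsSpanning) (l : L) :
    (colorClassSubgraph ⊤ (eK ∘ linewiseColoring φ w) (eK (j, l))).verts = {p | p ∈ l} := by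
  ext p
  constructor
  · rintro ⟨v, -, hc⟩
    exact mem_of_linewiseColoring_eq φ w (eK.injective hc) (Sym2.mem_mk_left p v)
  · intro hp
    obtain ⟨y, hy⟩ := hw ((φ l).symm ⟨p, hp⟩)
    simpa using (colorClassSubgraph_linewiseColoring_adj φ w eK hy l).fst_mem

theorem isCompleteEdgeColoring_linewiseColoring
    (hw : ∀ j, (colorClassSubgraph ⊤ w j).IsSpanning) :
    IsCompleteEdgeColoring ⊤ (eK ∘ linewiseColoring φ w) := by
  have hcover : ∀ j l p, p ∈ l →
      p ∈ (colorClassSubgraph ⊤ (eK ∘ linewiseColoring φ w) (eK (j, l))).verts := by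
    intro j l p hp
    rwa [colorClassSubgraph_linewiseColoring_verts φ w eK (hw j)]
  refine ⟨fun i => ?_, fun i i' _ => ?_⟩
  · obtain ⟨⟨j, l⟩, rfl⟩ := eK.surjective i
    obtain ⟨p, hp, -⟩ := exists_common_point P l l
    obtain ⟨v, hpv, hc⟩ := hcover j l p hp
    exact ⟨s(p, v), hpv, hc⟩
  · obtain ⟨⟨j, l⟩, rfl⟩ := eK.surjective i
    obtain ⟨⟨j', l'⟩, rfl⟩ := eK.surjective i'
    obtain ⟨p, hp, hp'⟩ := exists_common_point P l l'
    obtain ⟨v, hpv, hc⟩ := hcover j l p hp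
    obtain ⟨v', hpv', hc'⟩ := hcover j' l' p hp'
    exact ⟨p, v, v', hpv, hpv', hc, hc'⟩

theorem isConnectedEdgeColoring_linewiseColoring (hw : IsSpanningConnectedEdgeColoring ⊤ w) :
    IsConnectedEdgeColoring ⊤ (eK ∘ linewiseColoring φ w) := by
  intro i
  obtain ⟨⟨j, l⟩, rfl⟩ := eK.surjective i
  let f : (⊤ : SimpleGraph W) →g ⊤ :=
    ⟨fun x => (φ l x : P), fun h => by simpa [Subtype.val_inj] using h⟩
  have hverts : ((colorClassSubgraph ⊤ w j).map f).verts =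
      (colorClassSubgraph ⊤ (eK ∘ linewiseColoring φ w) (eK (j, l))).verts := by
    rw [colorClassSubgraph_linewiseColoring_verts φ w eK (hw j).1, Subgraph.map_verts,
      (hw j).1.verts_eq_univ, Set.image_univ]
    ext p
    exact ⟨fun ⟨x, hx⟩ => hx ▸ (φ l x).2, fun hp => ⟨(φ l).symm ⟨p, hp⟩, by simp [f]⟩⟩
  refine ((hw j).2.map_hom f).mono ⟨hverts.le, ?_⟩ hverts
  rintro _ _ ⟨x, y, hxy, rfl, rfl⟩
  exact colorClassSubgraph_linewiseColoring_adj φ w eK hxy l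

end linewiseColoring

theorem exists_connected_complete_edgeColoring [Finite P] [Finite L] {W : Type*}
    (hW : Nat.card W = order P L + 1) {r : ℕ} {w : Sym2 W → Fin r}
    (hw : IsSpanningConnectedEdgeColoring ⊤ w) :
    ∃ c : Sym2 P → Fin (r * Nat.card L),
      IsCompleteEdgeColoring ⊤ c ∧ IsConnectedEdgeColoring ⊤ c := by
  have : Finite W := Nat.finite_of_card_ne_zero (by omega)
  have φ : ∀ l : L, W ≃ {p : P // p ∈ l} := fun l =>
    (Finite.card_eq.1 (hW.trans (pointCount_eq P l).symm)).some
  let eK : Fin r × L ≃ Fin (r * Nat.card L) := Finite.equivFinOfCardEq (by simp)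
  exact ⟨eK ∘ linewiseColoring φ w,
    isCompleteEdgeColoring_linewiseColoring φ w eK fun j => (hw j).1,
    isConnectedEdgeColoring_linewiseColoring φ w eK hw⟩

end Configuration.ProjectivePlane

namespace Configuration.ofField

open scoped LinearAlgebra.Projectivization

variable (K : Type*) [Field K] [Finite K]

lemma card_eq : Nat.card (ℙ K (Fin 3 → K)) = Nat.card K ^ 2 + Nat.card K + 1 := by
  rw [Projectivization.card_of_finrank K (Fin 3 → K) (Module.finrank_fin_fun K)]
  simp [Finset.sum_range_succ]
  ring

lemma order_eq [DecidableEq K] :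
    ProjectivePlane.order (ℙ K (Fin 3 → K)) (ℙ K (Fin 3 → K)) = Nat.card K := by
  have : Fintype (ℙ K (Fin 3 → K)) := Fintype.ofFinite _
  have h := ProjectivePlane.card_points (ℙ K (Fin 3 → K)) (ℙ K (Fin 3 → K))
  rw [Fintype.card_eq_nat_card, card_eq] at h
  by_contra hne
  rcases Nat.lt_or_gt_of_ne hne with h' | h' <;> nlinarith

end Configuration.ofField

theorem connected_pseudoachromatic_index_lower_bound_prime_power
    (q : ℕ) (hq : IsPrimePow q) (n : ℕ) (hn : n = q ^ 2 + q + 1) :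
    (∃ c : Sym2 (Fin n) → Fin ((q + 1) / 2 * n),
      IsCompleteEdgeColoring (⊤ : SimpleGraph (Fin n)) c ∧
        IsConnectedEdgeColoring (⊤ : SimpleGraph (Fin n)) c) ∧
      (q + 1) / 2 * n ≤ connectedPseudoachromaticIndex n := by
  classical
  obtain ⟨F, _, _, rfl⟩ : ∃ (F : Type) (_ : Field F) (_ : Finite F), Nat.card F = q :=
    ⟨Fin q, (Fintype.nonempty_field_iff.2 (by simpa using hq)).some, inferInstance, by simp⟩
  have : NeZero ((Nat.card F + 1) / 2) := ⟨by have := Finite.one_lt_card (α := F); omega⟩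
  let P := Projectivization F (Fin 3 → F)
  have hP : Nat.card P = n := by rw [Configuration.ofField.card_eq, hn]
  have hplane := Configuration.ProjectivePlane.exists_connected_complete_edgeColoring
    (P := P) (L := P) (W := ZMod (Nat.card F + 1))
    (by rw [Nat.card_zmod, Configuration.ofField.order_eq])
    (isSpanningConnectedEdgeColoring_halfSumColoring (r := (Nat.card F + 1) / 2) (by omega))
  rw [hP] at hplane
  obtain ⟨c, hcomplete, hconnected⟩ := hplane
  let e : Fin n ≃ P := (Finite.equivFinOfCardEq hP).symm
  have hcol : ∃ c : Sym2 (Fin n) → Fin ((Nat.card F + 1) / 2 * n),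
      IsCompleteEdgeColoring ⊤ c ∧ IsConnectedEdgeColoring ⊤ c :=
    ⟨c ∘ Sym2.map e, hcomplete.comp_map e, hconnected.comp_map e⟩
  exact ⟨hcol, le_csSup ⟨_, fun k ⟨c, hc, _⟩ => hc.card_le⟩ hcol⟩
end

section
/- Let q ≥ 2 be an even integer, and let K_{q+1} be the complete graph on q + 1 vertices with u and v two of its vertices. Then the graph K_{q+1} − uv (the complete graph with the single edge uv removed) admits an edge-coloring with q − 1 colors such that every vertex is an owner of all q − 1 colors, i.e., every vertex is incident with at least one edge of each of the q − 1 colors. -/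
open SimpleGraph

theorem typeC_coloring_exists
    (q : ℕ) (hq : 2 ≤ q) (heven : Even q)
    (u v : Fin (q + 1)) (huv : u ≠ v) :
    ∃ c : Sym2 (Fin (q + 1)) → Fin (q - 1),
      ∀ (w : Fin (q + 1)) (i : Fin (q - 1)),
        ∃ x : Fin (q + 1),
          ((⊤ : SimpleGraph (Fin (q + 1))).deleteEdges {s(u, v)}).Adj w x ∧
            c s(w, x) = i := by
  classical
  haveI : NeZero (q - 1) := ⟨by omega⟩
  have hmodd : Odd (q - 1) := by
    obtain ⟨k, hk⟩ := heven; exact ⟨k - 1, by omega⟩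
  have hcop : Nat.Coprime 2 (q - 1) := Nat.coprime_two_left.mpr hmodd
  set s : Finset (Fin (q + 1)) := {u, v}ᶜ with hs
  have hmem : ∀ w, w ∈ s ↔ w ≠ u ∧ w ≠ v := by
    intro w; simp [hs]
  have hcard' : Fintype.card {x // x ∈ s} = Fintype.card (ZMod (q - 1)) := by
    rw [Fintype.card_coe, hs, Finset.card_compl, ZMod.card,
      Finset.card_insert_of_notMem (by simpa using huv), Finset.card_singleton]
    simp only [Fintype.card_fin]
    omega
  let e : {x // x ∈ s} ≃ ZMod (q - 1) := Fintype.equivOfCardEq hcard'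
  let g : Fin (q + 1) → ZMod (q - 1) := fun w => if h : w ∈ s then e ⟨w, h⟩ else 0
  have hg : ∀ (b : ZMod (q - 1)), g ((e.symm b : {x // x ∈ s}) : Fin (q + 1)) = b := by
    intro b
    simp only [g, dif_pos (e.symm b).2, Subtype.coe_eta, Equiv.apply_symm_apply]
  let F : Fin (q + 1) → Fin (q + 1) → ZMod (q - 1) := fun x y =>
    if x = u ∨ x = v then (if y = u ∨ y = v then 0 else g y + g y)
    else if y = u ∨ y = v then g x + g x else g x + g y
  have hF : ∀ x y, F x y = F y x := by
    intro x y
    simp only [F]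
    split_ifs <;> first | rfl | tauto | rw [add_comm]
  let zc : Sym2 (Fin (q + 1)) → ZMod (q - 1) := Sym2.lift ⟨F, hF⟩
  let φ : ZMod (q - 1) ≃ Fin (q - 1) := Fintype.equivFinOfCardEq (ZMod.card _)
  have hdouble : ∀ j : ZMod (q - 1), ∃ b : ZMod (q - 1), b + b = j := by
    intro j
    refine ⟨((ZMod.unitOfCoprime 2 hcop)⁻¹ : (ZMod (q - 1))ˣ) * j, ?_⟩
    have h2 : ((ZMod.unitOfCoprime 2 hcop : (ZMod (q - 1))ˣ) : ZMod (q - 1)) = 2 := by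
      rw [ZMod.coe_unitOfCoprime]; push_cast; ring
    calc (((ZMod.unitOfCoprime 2 hcop)⁻¹ : (ZMod (q - 1))ˣ) : ZMod (q - 1)) * j
          + (((ZMod.unitOfCoprime 2 hcop)⁻¹ : (ZMod (q - 1))ˣ) : ZMod (q - 1)) * j
        = ((ZMod.unitOfCoprime 2 hcop : (ZMod (q - 1))ˣ) : ZMod (q - 1))
          * (((ZMod.unitOfCoprime 2 hcop)⁻¹ : (ZMod (q - 1))ˣ) : ZMod (q - 1)) * j := by
          rw [h2]; ring
      _ = j := by
          rw [← Units.val_mul, mul_inv_cancel, Units.val_one, one_mul]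
  refine ⟨fun s2 => φ (zc s2), ?_⟩
  intro w i
  set j := φ.symm i with hj
  have hφ : ∀ z, zc z = j → φ (zc z) = i := by
    intro z h; rw [h, hj, Equiv.apply_symm_apply]
  by_cases hwu : w = u
  · -- w = u : take x with 2 g x = j
    obtain ⟨b, hb⟩ := hdouble j
    refine ⟨((e.symm b : {x // x ∈ s}) : Fin (q + 1)), ?_, ?_⟩
    · have hx := (hmem _).mp (e.symm b).2
      rw [deleteEdges_adj, top_adj, Set.mem_singleton_iff]
      constructor
      · exact fun h => hx.1 (by rw [← h, hwu])
      · rw [Sym2.eq_iff]; push_neg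
        constructor
        · intro _; exact hx.2
        · intro h; exact absurd (hwu.symm.trans h) huv
    · apply hφ
      have hx := (hmem _).mp (e.symm b).2
      show F w _ = j
      simp only [F, if_pos (Or.inl hwu), if_neg (by tauto : ¬((((e.symm b : {x // x ∈ s}) : Fin (q+1)) = u) ∨ (((e.symm b : {x // x ∈ s}) : Fin (q+1)) = v))), hg, hb]
  · by_cases hwv : w = v
    · obtain ⟨b, hb⟩ := hdouble j
      refine ⟨((e.symm b : {x // x ∈ s}) : Fin (q + 1)), ?_, ?_⟩
      · have hx := (hmem _).mp (e.symm b).2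
        rw [deleteEdges_adj, top_adj, Set.mem_singleton_iff]
        constructor
        · exact fun h => hx.2 (by rw [← h, hwv])
        · rw [Sym2.eq_iff]; push_neg
          constructor
          · intro h; exact absurd (h.symm.trans hwv) huv
          · intro _; exact hx.1
      · apply hφ
        have hx := (hmem _).mp (e.symm b).2
        show F w _ = j
        simp only [F, if_pos (Or.inr hwv), if_neg (by tauto : ¬((((e.symm b : {x // x ∈ s}) : Fin (q+1)) = u) ∨ (((e.symm b : {x // x ∈ s}) : Fin (q+1)) = v))), hg, hb]
    · -- w ∉ {u, v}
      have hw : w ∈ s := (hmem w).mpr ⟨hwu, hwv⟩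
      by_cases hcase : j = g w + g w
      · refine ⟨u, ?_, ?_⟩
        · rw [deleteEdges_adj, top_adj, Set.mem_singleton_iff]
          refine ⟨hwu, ?_⟩
          rw [Sym2.eq_iff]; push_neg
          exact ⟨fun h => absurd h hwu, fun h _ => absurd h hwv⟩
        · apply hφ
          show F w u = j
          have hFwu : F w u = g w + g w := by
            simp only [F]
            rw [if_neg (show ¬(w = u ∨ w = v) by tauto)]
            simp
          rw [hFwu, hcase]
      · set b := j - g w with hbdef
        have hba : b ≠ g w := by
          intro h
          rw [hbdef, sub_eq_iff_eq_add] at h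
          exact hcase h
        refine ⟨((e.symm b : {x // x ∈ s}) : Fin (q + 1)), ?_, ?_⟩
        · have hx := (hmem _).mp (e.symm b).2
          have hxw : ((e.symm b : {x // x ∈ s}) : Fin (q + 1)) ≠ w := by
            intro h
            apply hba
            rw [← hg b, h]
          rw [deleteEdges_adj, top_adj, Set.mem_singleton_iff]
          refine ⟨fun h => hxw h.symm, ?_⟩
          rw [Sym2.eq_iff]; push_neg
          exact ⟨fun h => absurd h hwu, fun h _ => absurd h hwv⟩
        · apply hφ
          have hx := (hmem _).mp (e.symm b).2
          have hFwx : F w ((e.symm b : {x // x ∈ s}) : Fin (q + 1))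
              = g w + g ((e.symm b : {x // x ∈ s}) : Fin (q + 1)) := by
            simp only [F]
            rw [if_neg (show ¬(w = u ∨ w = v) by tauto),
              if_neg (show ¬((((e.symm b : {x // x ∈ s}) : Fin (q+1)) = u) ∨ (((e.symm b : {x // x ∈ s}) : Fin (q+1)) = v)) by tauto)]
          show F w _ = j
          rw [hFwx, hg, hbdef, add_sub_cancel]
end

section
/- Let q ≥ 2 be an even integer, and let G be the graph obtained from the complete graph K_{q+1} with vertex set {v, u₁, u₁', …, u_{q/2}, u_{q/2}'} by adding a new vertex u adjacent exactly to u₁, …, u_{q/2}. Then G admits an edge-coloring with q colors such that every vertex of K_{q+1} (i.e., every vertex other than u) is an owner of all q colors, meaning that each such vertex is incident with at least one edge of each of the q colors. -/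
open SimpleGraph

/-- The graph obtained from the complete graph on the `q + 1` vertices
`{0, 1, …, q}` of `Fin (q + 2)` (vertex `0` playing the role of `v`, vertices
`1, …, q/2` playing the roles of `u₁, …, u_{q/2}` and vertices `q/2 + 1, …, q`
playing the roles of `u₁', …, u_{q/2}'`) by adding the new vertex `q + 1`
(playing the role of `u`) adjacent exactly to `u₁, …, u_{q/2}`. -/
def typeTwoGraph (q : ℕ) : SimpleGraph (Fin (q + 2)) :=
  SimpleGraph.fromRel (fun a b =>
    (a.val ≤ q ∧ b.val ≤ q) ∨ (a.val = q + 1 ∧ 1 ≤ b.val ∧ b.val ≤ q / 2))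

/-- Color of the edge from vertex `0` to vertex `k` (for `1 ≤ k ≤ q`). -/
def ttF (q k : ℕ) : ℕ :=
  if k - 1 < q / 2 then (2 * (k - 1) + 1) % q else (2 * (k - 1)) % q

/-- The edge coloring, as a function of the two (unordered) endpoints. -/
def ttH (q a b : ℕ) : ℕ :=
  if a = 0 then ttF q b
  else if b = 0 then ttF q a
  else if a = q + 1 then (2 * (b - 1)) % q
  else if b = q + 1 then (2 * (a - 1)) % q
  else (a - 1 + (b - 1)) % q

lemma ttF_lt (q k : ℕ) (hq : 0 < q) : ttF q k < q := by
  unfold ttF; split_ifs <;> exact Nat.mod_lt _ hq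

lemma ttH_lt (q a b : ℕ) (hq : 0 < q) : ttH q a b < q := by
  unfold ttH; split_ifs <;> first | exact ttF_lt q _ hq | exact Nat.mod_lt _ hq

lemma ttH_comm (q a b : ℕ) : ttH q a b = ttH q b a := by
  unfold ttH
  split_ifs <;> simp_all [Nat.add_comm]


lemma typeTwoGraph_adj {q : ℕ} {w x : Fin (q + 2)} (h : w.val ≠ x.val)
    (hrel : (w.val ≤ q ∧ x.val ≤ q) ∨ (x.val = q + 1 ∧ 1 ≤ w.val ∧ w.val ≤ q / 2)) :
    (typeTwoGraph q).Adj w x := by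
  rw [typeTwoGraph, SimpleGraph.fromRel_adj]
  refine ⟨fun he => h (congrArg Fin.val he), ?_⟩
  rcases hrel with h1 | h2
  · exact Or.inl (Or.inl h1)
  · exact Or.inr (Or.inr h2)

theorem typeTwo_coloring_exists (q : ℕ) (hq : 2 ≤ q) (heven : Even q) :
    ∃ c : Sym2 (Fin (q + 2)) → Fin q,
      ∀ w : Fin (q + 2), w.val ≤ q → ∀ i : Fin q,
        ∃ x : Fin (q + 2), (typeTwoGraph q).Adj w x ∧ c s(w, x) = i := by
  have hq0 : 0 < q := by omega
  obtain ⟨m, hm⟩ := heven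
  have hm2 : q / 2 = m := by omega
  refine ⟨Sym2.lift ⟨fun a b => ⟨ttH q a.val b.val, ttH_lt q _ _ hq0⟩, ?_⟩, ?_⟩
  · intro a b
    exact Fin.ext (ttH_comm q a.val b.val)
  intro w hw i
  have hi : i.val < q := i.isLt
  by_cases hw0 : w.val = 0
  · -- w is the vertex v = 0
    by_cases hodd : i.val % 2 = 1
    · -- i odd: take x with x - 1 = (i-1)/2 < q/2
      refine ⟨⟨(i.val - 1) / 2 + 1, by omega⟩, ?_, ?_⟩
      · exact typeTwoGraph_adj (show w.val ≠ (i.val - 1) / 2 + 1 by omega)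
          (Or.inl ⟨hw, show (i.val - 1) / 2 + 1 ≤ q by omega⟩)
      · apply Fin.ext
        simp only [Sym2.lift_mk]
        show ttH q w.val ((i.val - 1) / 2 + 1) = i.val
        rw [ttH, if_pos hw0, ttF, if_pos (by omega)]
        have h1 : 2 * ((i.val - 1) / 2 + 1 - 1) + 1 = i.val := by omega
        rw [h1, Nat.mod_eq_of_lt hi]
    · -- i even: take x with x - 1 = (i+q)/2 ≥ q/2
      refine ⟨⟨(i.val + q) / 2 + 1, by omega⟩, ?_, ?_⟩
      · exact typeTwoGraph_adj (show w.val ≠ (i.val + q) / 2 + 1 by omega)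
          (Or.inl ⟨hw, show (i.val + q) / 2 + 1 ≤ q by omega⟩)
      · apply Fin.ext
        simp only [Sym2.lift_mk]
        show ttH q w.val ((i.val + q) / 2 + 1) = i.val
        rw [ttH, if_pos hw0, ttF, if_neg (by omega)]
        have h1 : 2 * ((i.val + q) / 2 + 1 - 1) = i.val + q := by omega
        rw [h1, Nat.add_mod_right, Nat.mod_eq_of_lt hi]
  · -- 1 ≤ w.val ≤ q
    by_cases hiz : i.val = (2 * (w.val - 1)) % q
    · by_cases hzm : w.val - 1 < q / 2
      · -- use the edge to the extra vertex u = q+1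
        refine ⟨⟨q + 1, by omega⟩, ?_, ?_⟩
        · exact typeTwoGraph_adj (show w.val ≠ q + 1 by omega)
            (Or.inr ⟨rfl, by omega, show w.val ≤ q / 2 by omega⟩)
        · apply Fin.ext
          simp only [Sym2.lift_mk]
          show ttH q w.val (q + 1) = i.val
          rw [ttH, if_neg hw0, if_neg (by omega), if_neg (by omega), if_pos rfl]
          exact hiz.symm
      · -- use the edge to vertex 0
        refine ⟨⟨0, by omega⟩, ?_, ?_⟩
        · exact typeTwoGraph_adj (show w.val ≠ 0 from hw0)
            (Or.inl ⟨hw, show (0 : ℕ) ≤ q by omega⟩)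
        · apply Fin.ext
          simp only [Sym2.lift_mk]
          show ttH q w.val 0 = i.val
          rw [ttH, if_neg hw0, if_pos rfl, ttF, if_neg (by omega)]
          exact hiz.symm
    · -- generic color: use an inner edge to x = z' + 1 with z' = (i + q - (w-1)) % q
      have hz'lt : (i.val + q - (w.val - 1)) % q < q := Nat.mod_lt _ hq0
      have hkey : (w.val - 1 + (i.val + q - (w.val - 1)) % q) % q = i.val := by
        have h1 : (w.val - 1 + (i.val + q - (w.val - 1)) % q) % q
            = (w.val - 1 + (i.val + q - (w.val - 1))) % q :=
          (Nat.mod_modEq (i.val + q - (w.val - 1)) q).add_left (w.val - 1)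
        have h2 : w.val - 1 + (i.val + q - (w.val - 1)) = i.val + q := by omega
        rw [h1, h2, Nat.add_mod_right, Nat.mod_eq_of_lt hi]
      have hne : (i.val + q - (w.val - 1)) % q ≠ w.val - 1 := by
        intro h
        apply hiz
        rw [← hkey, h, ← two_mul]
      refine ⟨⟨(i.val + q - (w.val - 1)) % q + 1, by omega⟩, ?_, ?_⟩
      · exact typeTwoGraph_adj (show w.val ≠ (i.val + q - (w.val - 1)) % q + 1 by omega)
          (Or.inl ⟨hw, show (i.val + q - (w.val - 1)) % q + 1 ≤ q by omega⟩)
      · apply Fin.ext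
        simp only [Sym2.lift_mk]
        show ttH q w.val ((i.val + q - (w.val - 1)) % q + 1) = i.val
        rw [ttH, if_neg hw0, if_neg (by omega), if_neg (by omega), if_neg (by omega)]
        rw [Nat.add_sub_cancel]
        exact hkey
end
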